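/- arXiv:2109.07172 — 14 statements merged into one kernel-verified Lean document; each statement's English description precedes it below -/
import Mathlib

section
/- Let A be a Boolean algebra with a contact relation ⌢. Extend ⌢ to ultrafilters by 𝔲 ⌢ 𝔳 iff c ⌢ d for all c ∈ 𝔲 and d ∈ 𝔳. Then for all a, b ∈ A: a ⌢ b if and only if there exist ultrafilters 𝔲, 𝔳 with a ∈ 𝔲, b ∈ 𝔳, and 𝔲 ⌢ 𝔳. -/
/-- The contact-algebra axioms (C1)-(C4) for a relation `C` on a Boolean algebra. -/
def ContactAx {A : Type*} [BooleanAlgebra A] (C : A → A → Prop) : Prop :=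
  (∀ a : A, ⊥ < a → C a a) ∧
  (∀ a b : A, C a b → ⊥ < a ∧ ⊥ < b) ∧
  (∀ a b : A, C a b → C b a) ∧
  (∀ a b c : A, C a (b ⊔ c) ↔ C a b ∨ C a c)

/-- The non-tangential inclusion `a ≪ b`. -/
def Ll {A : Type*} [BooleanAlgebra A] (C : A → A → Prop) (a b : A) : Prop := ¬ C a bᶜ

/-- The normality (interpolation) axiom (I5) for a contact relation. -/
def NormalAx {A : Type*} [BooleanAlgebra A] (C : A → A → Prop) : Prop :=
  ∀ a c : A, Ll C a c → ⊥ < c → ∃ b : A, ⊥ < b ∧ Ll C a b ∧ Ll C b c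

/-- Ultrafilters in a Boolean algebra, as subsets. -/
def IsUltra {A : Type*} [BooleanAlgebra A] (u : Set A) : Prop :=
  ⊥ ∉ u ∧ (∀ a b : A, a ∈ u → a ≤ b → b ∈ u) ∧
    (∀ a b : A, a ∈ u → b ∈ u → a ⊓ b ∈ u) ∧ (∀ a : A, a ∈ u ∨ aᶜ ∈ u)

/-- Clusters for a contact relation `C`. -/
def IsCluster {A : Type*} [BooleanAlgebra A] (C : A → A → Prop) (c : Set A) : Prop :=
  c.Nonempty ∧ (∀ a ∈ c, ∀ b ∈ c, C a b) ∧
    (∀ a b : A, a ⊔ b ∈ c → a ∈ c ∨ b ∈ c) ∧ (∀ a : A, (∀ b ∈ c, C a b) → a ∈ c)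

/-- Ideals of a Boolean algebra, as subsets. -/
def IsIdealSet {A : Type*} [BooleanAlgebra A] (B : Set A) : Prop :=
  ⊥ ∈ B ∧ (∀ a b : A, b ∈ B → a ≤ b → a ∈ B) ∧ (∀ a b : A, a ∈ B → b ∈ B → a ⊔ b ∈ B)

/-- Local contact algebra axioms: contact axioms, `B` an ideal, and (BC1)-(BC3). -/
def LCAx {A : Type*} [BooleanAlgebra A] (C : A → A → Prop) (B : Set A) : Prop :=
  ContactAx C ∧ IsIdealSet B ∧
  (∀ a c : A, a ∈ B → Ll C a c → ∃ b ∈ B, Ll C a b ∧ Ll C b c) ∧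
  (∀ a b : A, C a b → ∃ c ∈ B, C a (c ⊓ b)) ∧
  (∀ a : A, ⊥ < a → ∃ b ∈ B, ⊥ < b ∧ Ll C b a)

/-- The Alexandroff extension of the contact relation of a local contact algebra. -/
def CAl {A : Type*} [BooleanAlgebra A] (C : A → A → Prop) (B : Set A) (a b : A) : Prop :=
  C a b ∨ (a ∉ B ∧ b ∉ B)

lemma key_ultra {A : Type*} [BooleanAlgebra A] (P : A → Prop)
    (hmono : ∀ x y : A, x ≤ y → P x → P y)
    (hadd : ∀ x y : A, P (x ⊔ y) → P x ∨ P y)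
    (hpos : ∀ x : A, P x → ⊥ < x)
    (a : A) (hPa : P a) :
    ∃ u : Set A, IsUltra u ∧ a ∈ u ∧ ∀ c ∈ u, P c := by
  set S : Set (Set A) := {F | a ∈ F ∧ (∀ x y : A, x ∈ F → x ≤ y → y ∈ F) ∧
    (∀ x y : A, x ∈ F → y ∈ F → x ⊓ y ∈ F) ∧ ∀ c ∈ F, P c} with hS
  have h0 : {x : A | a ≤ x} ∈ S := by
    refine ⟨le_refl a, fun x y hx hxy => le_trans hx hxy,
      fun x y hx hy => le_inf hx hy, fun c hc => hmono a c hc hPa⟩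
  have hub : ∀ c ⊆ S, IsChain (· ⊆ ·) c → c.Nonempty →
      ∃ ub ∈ S, ∀ s ∈ c, s ⊆ ub := by
    intro c hcS hchain hcne
    refine ⟨⋃₀ c, ⟨?_, ?_, ?_, ?_⟩, fun s hs => Set.subset_sUnion_of_mem hs⟩
    · obtain ⟨s, hs⟩ := hcne; exact ⟨s, hs, (hcS hs).1⟩
    · rintro x y ⟨s, hs, hx⟩ hxy; exact ⟨s, hs, (hcS hs).2.1 x y hx hxy⟩
    · rintro x y ⟨s, hs, hx⟩ ⟨t, ht, hy⟩
      rcases hchain.total hs ht with h | h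
      · exact ⟨t, ht, (hcS ht).2.2.1 x y (h hx) hy⟩
      · exact ⟨s, hs, (hcS hs).2.2.1 x y hx (h hy)⟩
    · rintro x ⟨s, hs, hx⟩; exact (hcS hs).2.2.2 x hx
  obtain ⟨F, hxF, hFS, hFmax⟩ := zorn_subset_nonempty S hub _ h0
  obtain ⟨haF, hup, hmeet, hPF⟩ := hFS
  refine ⟨F, ⟨?_, hup, hmeet, ?_⟩, haF, hPF⟩
  · intro hbot
    exact absurd (hpos ⊥ (hPF ⊥ hbot)) (lt_irrefl ⊥)
  · intro x
    by_contra hx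
    push_neg at hx
    obtain ⟨hx1, hx2⟩ := hx
    -- claim: (∀ f ∈ F, P (f ⊓ x)) ∨ (∀ f ∈ F, P (f ⊓ xᶜ))
    have hclaim : (∀ f ∈ F, P (f ⊓ x)) ∨ (∀ f ∈ F, P (f ⊓ xᶜ)) := by
      by_contra hcl
      push_neg at hcl
      obtain ⟨⟨f, hf, hPf⟩, ⟨g, hg, hPg⟩⟩ := hcl
      have hfg : f ⊓ g ∈ F := hmeet f g hf hg
      have hPfg : P (f ⊓ g) := hPF _ hfg
      have heq : f ⊓ g = (f ⊓ g ⊓ x) ⊔ (f ⊓ g ⊓ xᶜ) := by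
        rw [← inf_sup_left, sup_compl_eq_top, inf_top_eq]
      rw [heq] at hPfg
      rcases hadd _ _ hPfg with h | h
      · exact hPf (hmono _ _ (inf_le_inf_right x inf_le_left) h)
      · exact hPg (hmono _ _ (inf_le_inf_right xᶜ inf_le_right) h)
    have hext : ∀ z : A, (∀ f ∈ F, P (f ⊓ z)) → z ∈ F := by
      intro z hall
      have hF' : {y : A | ∃ f ∈ F, f ⊓ z ≤ y} ∈ S := by
        refine ⟨⟨a, haF, inf_le_left⟩, ?_, ?_, ?_⟩
        · rintro p q ⟨f, hf, hle⟩ hpq; exact ⟨f, hf, le_trans hle hpq⟩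
        · rintro p q ⟨f, hf, hle⟩ ⟨g, hg, hle'⟩
          refine ⟨f ⊓ g, hmeet f g hf hg, ?_⟩
          rw [inf_assoc]
          exact le_inf (le_trans (inf_le_inf_left f inf_le_right) hle)
            (le_trans inf_le_right hle')
        · rintro c ⟨f, hf, hle⟩; exact hmono _ _ hle (hall f hf)
      have hsub : F ⊆ {y : A | ∃ f ∈ F, f ⊓ z ≤ y} := fun y hy => ⟨y, hy, inf_le_left⟩
      exact hFmax hF' hsub ⟨a, haF, inf_le_right⟩
    rcases hclaim with hall | hall
    · exact hx1 (hext x hall)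
    · exact hx2 (hext xᶜ hall)

/-- in a contact algebra, `a ⌢ b` iff there are ultrafilters
`𝔲 ∋ a`, `𝔳 ∋ b` with `𝔲 ⌢ 𝔳` (i.e. `c ⌢ d` for all `c ∈ 𝔲`, `d ∈ 𝔳`). -/
theorem contact_iff_exists_ultrafilters {A : Type*} [BooleanAlgebra A]
    (C : A → A → Prop) (hC : ContactAx C) (a b : A) :
    C a b ↔ ∃ u v : Set A, IsUltra u ∧ IsUltra v ∧ a ∈ u ∧ b ∈ v ∧
      ∀ c ∈ u, ∀ d ∈ v, C c d := by
  obtain ⟨hC1, hC2, hC3, hC4⟩ := hC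
  have mono2 : ∀ x y z : A, C x y → y ≤ z → C x z := by
    intro x y z h hle
    have : C x (y ⊔ z) := (hC4 x y z).mpr (Or.inl h)
    rwa [sup_eq_right.mpr hle] at this
  have mono1 : ∀ x y z : A, C x z → x ≤ y → C y z := fun x y z h hle =>
    hC3 _ _ (mono2 z x y (hC3 _ _ h) hle)
  constructor
  · intro hab
    obtain ⟨u, hu, hau, hup⟩ := key_ultra (fun x => C x b)
      (fun x y hle h => mono1 x y b h hle)
      (fun x y h => (hC4 b x y).mp (hC3 _ _ h) |>.imp (hC3 _ _) (hC3 _ _))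
      (fun x h => (hC2 x b h).1) a hab
    obtain ⟨v, hv, hbv, hvp⟩ := key_ultra (fun d => ∀ c ∈ u, C c d)
      (fun x y hle h c hc => mono2 c x y (h c hc) hle)
      (fun x y h => by
        by_contra hcon
        push_neg at hcon
        obtain ⟨h1, h2⟩ := hcon
        obtain ⟨c, hc, hcx⟩ := h1
        obtain ⟨c', hc', hcy⟩ := h2
        have hcc : c ⊓ c' ∈ u := hu.2.2.1 c c' hc hc'
        rcases (hC4 (c ⊓ c') x y).mp (h _ hcc) with h' | h'
        · exact hcx (mono1 _ _ _ h' inf_le_left)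
        · exact hcy (mono1 _ _ _ h' inf_le_right))
      (fun x h => (hC2 a x (h a hau)).2) b hup
    exact ⟨u, v, hu, hv, hau, hbv, fun c hc d hd => hvp d hd c hc⟩
  · rintro ⟨u, v, _, _, hau, hbv, h⟩
    exact h a hau b hbv
end

section
/- If (A, ⌢) is a normal contact algebra, then the extension of the contact relation to ultrafilters, 𝔲 ⌢ 𝔳 iff (∀ c ∈ 𝔲, ∀ d ∈ 𝔳, c ⌢ d), is an equivalence relation on the set of all ultrafilters of A. -/
/-- in a normal contact algebra, the extension of the contact
relation to ultrafilters is an equivalence relation on the set of ultrafilters. -/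
theorem ultrafilter_contact_equivalence {A : Type*} [BooleanAlgebra A]
    (C : A → A → Prop) (hC : ContactAx C) (hN : NormalAx C) :
    Equivalence (fun u v : {s : Set A // IsUltra s} =>
      ∀ c ∈ u.1, ∀ d ∈ v.1, C c d) := by
  obtain ⟨h1, h2, h3, h4⟩ := hC
  -- monotonicity in the second argument
  have monoR : ∀ a b b' : A, C a b → b ≤ b' → C a b' := by
    intro a b b' hab hle
    have : b ⊔ b' = b' := sup_eq_right.mpr hle
    have := (h4 a b b').mpr (Or.inl hab)
    rwa [sup_eq_right.mpr hle] at this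
  have monoL : ∀ a a' b : A, C a b → a ≤ a' → C a' b := by
    intro a a' b hab hle
    exact h3 _ _ (monoR b a a' (h3 _ _ hab) hle)
  constructor
  · -- reflexivity
    rintro ⟨u, hu0, humono, humeet, huult⟩ c hc d hd
    have hcd : c ⊓ d ∈ u := humeet c d hc hd
    have hpos : ⊥ < c ⊓ d := by
      rcases eq_bot_or_bot_lt (c ⊓ d) with h | h
      · exact absurd (h ▸ hcd) hu0
      · exact h
    exact monoL _ _ _ (monoR _ _ _ (h1 _ hpos) inf_le_right) inf_le_left
  · -- symmetry
    intro u v h c hc d hd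
    exact h3 _ _ (h d hd c hc)
  · -- transitivity
    rintro ⟨u, hu⟩ ⟨v, hv0, hvmono, hvmeet, hvult⟩ ⟨w, hw⟩ huv hvw
    intro c hc d hd
    by_contra hncd
    have hcpos : ⊥ < c := by
      rcases eq_bot_or_bot_lt c with h | h
      · exact absurd (h ▸ hc) hu.1
      · exact h
    have hdc : (⊥ : A) < dᶜ := by
      rcases eq_bot_or_bot_lt (dᶜ) with h | h
      · have : d = ⊤ := by
          have := congrArg compl h
          simpa using this
        exact absurd (monoR _ _ _ (h1 c hcpos) (le_of_le_of_eq le_top this.symm)) hncd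
      · exact h
    have hll : Ll C c dᶜ := by
      unfold Ll
      rwa [compl_compl]
    obtain ⟨b, hbpos, hcb, hbd⟩ := hN c dᶜ hll hdc
    rcases hvult b with hb | hb
    · exact (by unfold Ll at hbd; rwa [compl_compl] at hbd : ¬ C b d)
        (hvw b hb d hd)
    · exact hcb (huv c hc bᶜ hb)
end

section
/- In a normal contact algebra A, every ultrafilter 𝔲 generates the cluster 𝔠_𝔲 = {a ∈ A | a ⌢ b for all b ∈ 𝔲}, and every cluster in A equals 𝔠_𝔲 for some ultrafilter 𝔲; moreover 𝔠_𝔲 is the unique cluster containing 𝔲, and any two clusters comparable by inclusion are equal. -/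
section ClusterAux

variable {A : Type*} [BooleanAlgebra A] {C : A → A → Prop}

lemma aux_mono_right (hC : ContactAx C) {a b b' : A} (h : C a b) (hbb : b ≤ b') : C a b' := by
  have := (hC.2.2.2 a b b').mpr (Or.inl h)
  rwa [sup_eq_right.mpr hbb] at this

lemma aux_mono_left (hC : ContactAx C) {a a' b : A} (h : C a b) (haa : a ≤ a') : C a' b :=
  hC.2.2.1 _ _ (aux_mono_right hC (hC.2.2.1 _ _ h) haa)

lemma aux_mem_pos {u : Set A} (hu : IsUltra u) {b : A} (hb : b ∈ u) : ⊥ < b := by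
  rcases eq_or_ne b ⊥ with rfl | h
  · exact absurd hb hu.1
  · exact lt_of_le_of_ne bot_le (Ne.symm h)

lemma aux_top_mem {u : Set A} (hu : IsUltra u) : ⊤ ∈ u := by
  rcases hu.2.2.2 ⊤ with h | h
  · exact h
  · rw [compl_top] at h; exact absurd h hu.1

lemma aux_u_sub (hC : ContactAx C) {u : Set A} (hu : IsUltra u) :
    u ⊆ {a : A | ∀ b ∈ u, C a b} := by
  intro a ha b hb
  have hm : a ⊓ b ∈ u := hu.2.2.1 a b ha hb
  have hpos : ⊥ < a ⊓ b := aux_mem_pos hu hm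
  have h := hC.1 _ hpos
  exact aux_mono_left hC (aux_mono_right hC h inf_le_right) inf_le_left

lemma aux_cluster (hC : ContactAx C) (hN : NormalAx C) {u : Set A} (hu : IsUltra u) :
    IsCluster C {a : A | ∀ b ∈ u, C a b} := by
  obtain ⟨h1, h2, h3, h4⟩ := hC
  refine ⟨⟨⊤, ?_⟩, ?_, ?_, ?_⟩
  · intro b hb
    exact aux_mono_left ⟨h1, h2, h3, h4⟩ (h1 b (aux_mem_pos hu hb)) le_top
  · -- cl1
    intro a ha a' ha'
    by_contra h
    by_cases hc : a'ᶜ = ⊥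
    · have : a' = ⊤ := by
        have := congrArg compl hc
        rwa [compl_compl, compl_bot] at this
      exact h (this ▸ ha ⊤ (aux_top_mem hu))
    · have hcpos : ⊥ < a'ᶜ := lt_of_le_of_ne bot_le (Ne.symm hc)
      have hll : Ll C a a'ᶜ := by
        unfold Ll; rwa [compl_compl]
      obtain ⟨b, hbpos, hab, hba⟩ := hN a a'ᶜ hll hcpos
      rcases hu.2.2.2 b with hb | hb
      · have : C a' b := ha' b hb
        unfold Ll at hba; rw [compl_compl] at hba
        exact hba (h3 _ _ this)
      · exact hab (ha bᶜ hb)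
  · -- cl2
    intro a b hab
    by_contra h
    simp only [Set.mem_setOf_eq] at h
    push_neg at h
    obtain ⟨⟨b1, hb1, hab1⟩, ⟨b2, hb2, hab2⟩⟩ := h
    have hm : b1 ⊓ b2 ∈ u := hu.2.2.1 _ _ hb1 hb2
    have hc : C (a ⊔ b) (b1 ⊓ b2) := hab _ hm
    rcases (h4 (b1 ⊓ b2) a b).mp (h3 _ _ hc) with h' | h'
    · exact hab1 (aux_mono_right ⟨h1, h2, h3, h4⟩ (h3 _ _ h') inf_le_left)
    · exact hab2 (aux_mono_right ⟨h1, h2, h3, h4⟩ (h3 _ _ h') inf_le_right)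
  · -- cl3
    intro a h b hb
    exact h b (aux_u_sub ⟨h1, h2, h3, h4⟩ hu hb)

lemma aux_part4 (hC : ContactAx C) (hN : NormalAx C) {u : Set A} (hu : IsUltra u)
    {c : Set A} (hc : IsCluster C c) (huc : u ⊆ c) :
    c = {a : A | ∀ b ∈ u, C a b} := by
  obtain ⟨h1, h2, h3, h4⟩ := hC
  ext a
  constructor
  · intro ha b hb
    exact hc.2.1 a ha b (huc hb)
  · intro ha
    apply hc.2.2.2
    intro b hb
    by_contra hab
    by_cases hbc : bᶜ = ⊥
    · have hb' : b = ⊤ := by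
        have := congrArg compl hbc
        rwa [compl_compl, compl_bot] at this
      exact hab (hb' ▸ ha ⊤ (aux_top_mem hu))
    · have hbcpos : ⊥ < bᶜ := lt_of_le_of_ne bot_le (Ne.symm hbc)
      have hll : Ll C a bᶜ := by unfold Ll; rwa [compl_compl]
      obtain ⟨d, hdpos, had, hdb⟩ := hN a bᶜ hll hbcpos
      rcases hu.2.2.2 d with hd | hd
      · unfold Ll at hdb; rw [compl_compl] at hdb
        exact hdb (h3 _ _ (hc.2.1 b hb d (huc hd)))
      · exact had (ha dᶜ hd)

lemma aux_exists_ultra (hC : ContactAx C) {c : Set A} (hc : IsCluster C c) :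
    ∃ u : Set A, IsUltra u ∧ u ⊆ c := by
  obtain ⟨h1, h2, h3, h4⟩ := hC
  -- c is upward closed
  have hup : ∀ x ∈ c, ∀ y : A, x ≤ y → y ∈ c := by
    intro x hx y hxy
    apply hc.2.2.2
    intro z hz
    exact aux_mono_left ⟨h1, h2, h3, h4⟩ (hc.2.1 x hx z hz) hxy
  have hbot : ⊥ ∉ c := by
    intro h
    exact absurd (hc.2.1 ⊥ h ⊥ h) (fun hcc => absurd (h2 _ _ hcc).1 (lt_irrefl ⊥))
  have htop : ⊤ ∈ c := by
    obtain ⟨x, hx⟩ := hc.1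
    exact hup x hx ⊤ le_top
  -- the filter F = {a | aᶜ ∉ c}
  set F : Set A := {a : A | aᶜ ∉ c} with hF
  have hFfilt : Order.IsPFilter F := by
    apply Order.IsPFilter.of_def
    · exact ⟨⊤, by simp [hF, compl_top, hbot]⟩
    · intro x hx y hy
      refine ⟨x ⊓ y, ?_, inf_le_left, inf_le_right⟩
      simp only [hF, Set.mem_setOf_eq, compl_inf] at *
      intro hmem
      rcases hc.2.2.1 _ _ hmem with h | h
      · exact hx h
      · exact hy h
    · intro x y hxy hx
      simp only [hF, Set.mem_setOf_eq] at *
      intro hyc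
      exact hx (hup _ hyc _ (compl_le_compl hxy))
  set PF : Order.PFilter A := hFfilt.toPFilter with hPF
  have hPFmem : ∀ x : A, x ∈ PF ↔ x ∈ F := fun x => Iff.rfl
  have hdisj : Disjoint (PF : Set A) ((Order.Ideal.principal (⊥ : A)) : Set A) := by
    rw [Set.disjoint_left]
    intro x hx hx'
    have hxbot : x ≤ ⊥ := Order.Ideal.mem_principal.mp hx'
    have : x = ⊥ := le_bot_iff.mp hxbot
    subst this
    have : (⊥ : A)ᶜ ∉ c := hx
    rw [compl_bot] at this
    exact this htop
  obtain ⟨J, hJprime, _, hJdisj⟩ :=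
    DistribLattice.prime_ideal_of_disjoint_filter_ideal (F := PF) hdisj
  refine ⟨{a : A | aᶜ ∈ J}, ⟨?_, ?_, ?_, ?_⟩, ?_⟩
  · -- ⊥ ∉ u
    intro h
    simp only [Set.mem_setOf_eq, compl_bot] at h
    have : ∀ x : A, x ∈ J := fun x => J.lower le_top h
    exact hJprime.toIsProper.ne_univ (Set.eq_univ_iff_forall.mpr this)
  · intro a b ha hab
    exact J.lower (compl_le_compl hab) ha
  · intro a b ha hb
    simp only [Set.mem_setOf_eq, compl_inf]
    exact J.sup_mem ha hb
  · intro a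
    rcases hJprime.mem_or_compl_mem (x := aᶜ) with h | h
    · exact Or.inl h
    · exact Or.inr (by simpa using h)
  · -- u ⊆ c
    intro a ha
    simp only [Set.mem_setOf_eq] at ha
    have : aᶜ ∉ PF := Set.disjoint_right.mp hJdisj ha
    have : aᶜ ∉ F := this
    simp only [hF, Set.mem_setOf_eq, compl_compl, not_not] at this
    exact this

end ClusterAux

/-- in a normal contact algebra, every ultrafilter `𝔲` generates the
cluster `𝔠_𝔲 = {a | ∀ b ∈ 𝔲, a ⌢ b}`; every cluster arises this way; `𝔠_𝔲` is the
unique cluster containing `𝔲`; and clusters comparable by inclusion are equal. -/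

theorem cluster_generated_by_ultrafilter {A : Type*} [BooleanAlgebra A]
    (C : A → A → Prop) (hC : ContactAx C) (hN : NormalAx C) :
    (∀ u : Set A, IsUltra u → IsCluster C {a : A | ∀ b ∈ u, C a b}) ∧
    (∀ u : Set A, IsUltra u → u ⊆ {a : A | ∀ b ∈ u, C a b}) ∧
    (∀ c : Set A, IsCluster C c → ∃ u : Set A, IsUltra u ∧ c = {a : A | ∀ b ∈ u, C a b}) ∧
    (∀ u : Set A, IsUltra u → ∀ c : Set A, IsCluster C c → u ⊆ c →
      c = {a : A | ∀ b ∈ u, C a b}) ∧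
    (∀ c d : Set A, IsCluster C c → IsCluster C d → c ⊆ d → c = d) := by
  refine ⟨fun u hu => aux_cluster hC hN hu,
    fun u hu => aux_u_sub hC hu,
    fun c hc => ?_,
    fun u hu c hc huc => aux_part4 hC hN hu hc huc,
    fun c d hc hd hcd => ?_⟩
  · obtain ⟨u, hu, huc⟩ := aux_exists_ultra hC hc
    exact ⟨u, hu, aux_part4 hC hN hu hc huc⟩
  · obtain ⟨u, hu, huc⟩ := aux_exists_ultra hC hc
    rw [aux_part4 hC hN hu hc huc, aux_part4 hC hN hu hd (huc.trans hcd)]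
end

section
/- In a normal contact algebra, two ultrafilters 𝔲, 𝔳 satisfy 𝔲 ⌢ 𝔳 (in the extended contact relation) if and only if the clusters they generate coincide: 𝔠_𝔲 = 𝔠_𝔳. -/
/-- in a normal contact algebra, `𝔲 ⌢ 𝔳` iff `𝔠_𝔲 = 𝔠_𝔳`. -/
theorem ultrafilter_contact_iff_cluster_eq {A : Type*} [BooleanAlgebra A]
    (C : A → A → Prop) (hC : ContactAx C) (hN : NormalAx C)
    (u v : Set A) (hu : IsUltra u) (hv : IsUltra v) :
    (∀ c ∈ u, ∀ d ∈ v, C c d) ↔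
      {a : A | ∀ b ∈ u, C a b} = {a : A | ∀ b ∈ v, C a b} := by
  obtain ⟨hC1, hC2, hC3, hC4⟩ := hC
  -- monotonicity of C
  have mono2 : ∀ a b b' : A, C a b → b ≤ b' → C a b' := by
    intro a b b' h hle
    have : C a (b ⊔ b') := (hC4 a b b').2 (Or.inl h)
    rwa [sup_eq_right.mpr hle] at this
  have mono1 : ∀ a a' b : A, C a b → a ≤ a' → C a' b := by
    intro a a' b h hle
    exact hC3 _ _ (mono2 b a a' (hC3 _ _ h) hle)
  -- ⊤ ∈ any ultrafilter
  have topmem : ∀ w : Set A, IsUltra w → (⊤ : A) ∈ w := by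
    intro w hw
    rcases hw.2.2.2 ⊥ with h | h
    · exact absurd h hw.1
    · rwa [compl_bot] at h
  -- key lemma: if u⌢v then 𝔠_u ⊆ 𝔠_v
  have key : ∀ u v : Set A, IsUltra u → IsUltra v →
      (∀ c ∈ u, ∀ d ∈ v, C c d) →
      {a : A | ∀ b ∈ u, C a b} ⊆ {a : A | ∀ b ∈ v, C a b} := by
    intro u v hu hv huv a ha d hd
    by_contra hcon
    have hll : Ll C a dᶜ := by simpa [Ll] using hcon
    have hdc : ⊥ < dᶜ := by
      rcases eq_bot_or_bot_lt dᶜ with h | h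
      · have : d = ⊤ := by simpa using congrArg compl h
        subst this
        exact absurd (ha ⊤ (topmem u hu)) hcon
      · exact h
    obtain ⟨b, hb, hab, hbd⟩ := hN a dᶜ hll hdc
    rcases hu.2.2.2 b with hbu | hbu
    · -- b ∈ u, so C b d by u⌢v, but Ll C b dᶜ says ¬ C b d
      exact hbd (by simpa [Ll] using huv b hbu d hd)
    · exact hab (ha bᶜ hbu)
  constructor
  · intro huv
    apply Set.Subset.antisymm
    · exact key u v hu hv huv
    · exact key v u hv hu (fun d hd c hc => hC3 _ _ (huv c hc d hd))
  · intro heq c hc d hd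
    -- c ∈ 𝔠_u
    have hcu : c ∈ {a : A | ∀ b ∈ u, C a b} := by
      intro b hb
      have hmem : c ⊓ b ∈ u := hu.2.2.1 c b hc hb
      have hne : ⊥ < c ⊓ b := by
        rcases eq_bot_or_bot_lt (c ⊓ b) with h | h
        · exact absurd (h ▸ hmem) hu.1
        · exact h
      exact mono1 _ _ _ (mono2 _ _ _ (hC1 _ hne) inf_le_right) inf_le_left
    rw [heq] at hcu
    exact hcu d hd
end

section
/- Let (A, ⌢, 𝔹) be a local contact algebra. The Alexandroff extension ⌢_Al, defined by a ⌢_Al b iff (a ⌢ b or both a, b are unbounded), makes (A, ⌢_Al) a normal contact algebra. -/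
/-- the Alexandroff extension `⌢_Al` of a local contact algebra
makes `(A, ⌢_Al)` a normal contact algebra. -/
theorem alexandroff_extension_normal {A : Type*} [BooleanAlgebra A]
    (C : A → A → Prop) (B : Set A) (hL : LCAx C B) :
    ContactAx (CAl C B) ∧ NormalAx (CAl C B) := by
  obtain ⟨⟨hC1, hC2, hC3, hC4⟩, ⟨hB0, hBdown, hBup⟩, hBC1, hBC2, hBC3⟩ := hL
  have mono : ∀ a b b' : A, C a b → b ≤ b' → C a b' := by
    intro a b b' h hle
    have := (hC4 a b b').mpr (Or.inl h)
    rwa [sup_eq_right.mpr hle] at this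
  have mono' : ∀ a a' b : A, C a b → a ≤ a' → C a' b := fun a a' b h hle =>
    hC3 _ _ (mono b a a' (hC3 _ _ h) hle)
  have ll_le : ∀ a b : A, Ll C a b → a ≤ b := by
    intro a b h
    by_contra hab
    have hne : a \ b ≠ ⊥ := fun h0 => hab (sdiff_eq_bot_iff.mp h0)
    have h1 : C (a \ b) (a \ b) := hC1 _ (bot_lt_iff_ne_bot.mpr hne)
    have h2 : C (a \ b) bᶜ := mono _ _ _ h1 (by rw [sdiff_eq]; exact inf_le_right)
    exact h (mono' _ _ _ h2 sdiff_le)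
  have hAx : ContactAx (CAl C B) := by
    refine ⟨fun a ha => Or.inl (hC1 a ha), ?_, ?_, ?_⟩
    · intro a b hab
      rcases hab with h | ⟨ha, hb⟩
      · exact hC2 a b h
      · exact ⟨bot_lt_iff_ne_bot.mpr (fun h => ha (h ▸ hB0)),
          bot_lt_iff_ne_bot.mpr (fun h => hb (h ▸ hB0))⟩
    · intro a b hab
      rcases hab with h | ⟨ha, hb⟩
      · exact Or.inl (hC3 a b h)
      · exact Or.inr ⟨hb, ha⟩
    · intro a b c
      constructor
      · intro hab
        rcases hab with h | ⟨ha, hbc⟩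
        · rcases (hC4 a b c).mp h with h | h
          · exact Or.inl (Or.inl h)
          · exact Or.inr (Or.inl h)
        · by_cases hb : b ∈ B
          · by_cases hc : c ∈ B
            · exact absurd (hBup b c hb hc) hbc
            · exact Or.inr (Or.inr ⟨ha, hc⟩)
          · exact Or.inl (Or.inr ⟨ha, hb⟩)
      · intro hab
        rcases hab with (h | ⟨ha, hb⟩) | (h | ⟨ha, hc⟩)
        · exact Or.inl ((hC4 a b c).mpr (Or.inl h))
        · exact Or.inr ⟨ha, fun h => hb (hBdown b (b ⊔ c) h le_sup_left)⟩
        · exact Or.inl ((hC4 a b c).mpr (Or.inr h))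
        · exact Or.inr ⟨ha, fun h => hc (hBdown c (b ⊔ c) h le_sup_right)⟩
  refine ⟨hAx, ?_⟩
  intro a c hac hc
  have hnc : ¬ C a cᶜ := fun h => hac (Or.inl h)
  have hside : a ∈ B ∨ cᶜ ∈ B := by
    by_contra h
    push_neg at h
    exact hac (Or.inr ⟨h.1, h.2⟩)
  by_cases ha : a ∈ B
  · by_cases ha0 : a = ⊥
    · obtain ⟨b, hbB, hb0, hbc⟩ := hBC3 c hc
      refine ⟨b, hb0, ?_, ?_⟩
      · intro h
        rcases h with h | ⟨h1, _⟩
        · exact absurd ((hC2 _ _ h).1) (by simp [ha0])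
        · exact h1 (ha0 ▸ ha)
      · intro h
        rcases h with h | ⟨h1, _⟩
        · exact hbc h
        · exact h1 hbB
    · obtain ⟨b, hbB, hab, hbc⟩ := hBC1 a c ha hnc
      have hab' : a ≤ b := ll_le a b hab
      refine ⟨b, lt_of_lt_of_le (bot_lt_iff_ne_bot.mpr ha0) hab', ?_, ?_⟩
      · intro h; rcases h with h | ⟨h1, _⟩
        · exact hab h
        · exact h1 ha
      · intro h; rcases h with h | ⟨h1, _⟩
        · exact hbc h
        · exact h1 hbB
  · have hcB : cᶜ ∈ B := hside.resolve_left ha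
    have hll : Ll C cᶜ aᶜ := by
      intro h
      rw [compl_compl] at h
      exact hnc (hC3 _ _ h)
    obtain ⟨d, hdB, h1, h2⟩ := hBC1 cᶜ aᶜ hcB hll
    refine ⟨dᶜ, ?_, ?_, ?_⟩
    · rw [bot_lt_iff_ne_bot]
      intro h
      have hd : d = ⊤ := by
        have := congrArg compl h
        simpa using this
      have : (⊤ : A) ≤ aᶜ := hd ▸ ll_le d aᶜ h2
      have ha0 : a = ⊥ := by
        have : a ≤ ⊥ := by
          have := compl_le_compl this
          simpa using this
        exact le_bot_iff.mp this
      exact ha (ha0 ▸ hB0)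
    · intro h
      rcases h with h | ⟨_, h2'⟩
      · exact h2 (show C d aᶜᶜ by rw [compl_compl]; exact hC3 _ _ (by rwa [compl_compl] at h))
      · exact h2' (by rwa [compl_compl])
    · intro h
      rcases h with h | ⟨_, h1'⟩
      · exact h1 (hC3 _ _ h)
      · exact h1' hcB
end

section
/- Let (A, ⌢, 𝔹) be a local contact algebra with 1 ∉ 𝔹. Then the set 𝔠_∞ = A \ 𝔹 is a cluster in the normal contact algebra (A, ⌢_Al), and it is the unique unbounded cluster in A. -/
/-- if `1 ∉ 𝔹`, then `𝔠_∞ = A \ 𝔹` is a cluster in `(A, ⌢_Al)`;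
it is unbounded, and it is the only unbounded cluster. -/
theorem unbounded_cluster_unique {A : Type*} [BooleanAlgebra A]
    (C : A → A → Prop) (B : Set A) (hL : LCAx C B) (h1 : (⊤ : A) ∉ B) :
    IsCluster (CAl C B) {a : A | a ∉ B} ∧
    (¬ ∃ b ∈ ({a : A | a ∉ B} : Set A), b ∈ B) ∧
    (∀ c : Set A, IsCluster (CAl C B) c → (¬ ∃ b ∈ c, b ∈ B) →
      c = {a : A | a ∉ B}) := by
  obtain ⟨⟨hC1, hC2, hC3, hC4⟩, ⟨hB0, hBdown, hBsup⟩, hBC1, hBC2, hBC3⟩ := hL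
  have hcl : IsCluster (CAl C B) {a : A | a ∉ B} := by
    refine ⟨⟨⊤, h1⟩, ?_, ?_, ?_⟩
    · intro a ha b hb; exact Or.inr ⟨ha, hb⟩
    · intro a b hab
      by_contra h
      push_neg at h
      simp only [Set.mem_setOf_eq, not_not] at h
      exact hab (hBsup a b h.1 h.2)
    · intro a ha
      by_contra haB
      simp only [Set.mem_setOf_eq, not_not] at haB
      have hll : Ll C a ⊤ := by
        simp only [Ll, compl_top]
        intro hc
        exact lt_irrefl ⊥ (hC2 a ⊥ hc).2
      obtain ⟨b, hbB, hab, -⟩ := hBC1 a ⊤ haB hll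
      have hbc : bᶜ ∉ B := by
        intro h
        exact h1 (by simpa using hBsup b bᶜ hbB h)
      have := ha bᶜ hbc
      rcases this with h | h
      · exact hab h
      · exact h.1 haB
  refine ⟨hcl, ?_, ?_⟩
  · rintro ⟨b, hb, hbB⟩; exact hb hbB
  · intro c hc hub
    apply Set.eq_of_subset_of_subset
    · intro a ha
      intro haB
      exact hub ⟨a, ha, haB⟩
    · intro a ha
      apply hc.2.2.2
      intro b hb
      exact Or.inr ⟨ha, fun hbB => hub ⟨b, hb, hbB⟩⟩
end

section
/- Let (A, ⌢, 𝔹) be a local contact algebra and 𝔲 an ultrafilter in A. If the cluster 𝔠_𝔲 generated by 𝔲 in (A, ⌢_Al) contains a bounded element, then 𝔲 itself contains a bounded element. -/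
/-- if the cluster `𝔠_𝔲` generated by an ultrafilter `𝔲` in
`(A, ⌢_Al)` contains a bounded element, then so does `𝔲`. -/
theorem bounded_cluster_bounded_ultrafilter {A : Type*} [BooleanAlgebra A]
    (C : A → A → Prop) (B : Set A) (hL : LCAx C B)
    (u : Set A) (hu : IsUltra u)
    (h : ∃ b ∈ ({a : A | ∀ x ∈ u, CAl C B a x} : Set A), b ∈ B) :
    ∃ b ∈ u, b ∈ B := by
  obtain ⟨b, hbcl, hbB⟩ := h
  by_contra hcon
  push_neg at hcon
  -- b ≪ ⊤
  have hllt : Ll C b ⊤ := by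
    intro hC
    rw [compl_top] at hC
    exact lt_irrefl ⊥ (hL.1.2.1 b ⊥ hC).2
  obtain ⟨d, hdB, hbd, -⟩ := hL.2.2.1 b ⊤ hbB hllt
  have hdcu : dᶜ ∈ u := by
    rcases hu.2.2.2 d with hd | hd
    · exact absurd hdB (hcon d hd)
    · exact hd
  rcases hbcl dᶜ hdcu with hC | ⟨hb, -⟩
  · exact hbd hC
  · exact hb hbB
end

section
/- Let 𝔠 be a bounded cluster in a local contact algebra (A, ⌢, 𝔹). Then: (a) for every a ∈ 𝔠 there is a bounded c ∈ 𝔠 with c ≤ a; and (b) an element a ∉ 𝔠 if and only if there is a bounded b ∈ 𝔠 with b ≪ a*. -/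
/-- for a bounded cluster `𝔠` in a local contact algebra:
(a) every `a ∈ 𝔠` lies above some bounded `c ∈ 𝔠`; (b) `a ∉ 𝔠` iff there is a
bounded `b ∈ 𝔠` with `b ≪ a*`. -/
theorem bounded_cluster_props {A : Type*} [BooleanAlgebra A]
    (C : A → A → Prop) (B : Set A) (hL : LCAx C B)
    (c : Set A) (hc : IsCluster (CAl C B) c) (hb : ∃ b ∈ c, b ∈ B) :
    (∀ a ∈ c, ∃ b ∈ c, b ∈ B ∧ b ≤ a) ∧
    (∀ a : A, a ∉ c ↔ ∃ b ∈ c, b ∈ B ∧ Ll C b aᶜ) := by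
  obtain ⟨hC, hI, hBC1, hBC2, hBC3⟩ := hL
  obtain ⟨hC1, hC2, hC3, hC4⟩ := hC
  obtain ⟨hne, hpair, hprime, hmax⟩ := hc
  obtain ⟨b0, hb0c, hb0B⟩ := hb
  obtain ⟨hIbot, hIdown, hIsup⟩ := hI
  have mono : ∀ x y y' : A, y' ≤ y → C x y' → C x y := by
    intro x y y' h hc'
    have := (hC4 x y' y).2 (Or.inl hc')
    rwa [sup_eq_right.mpr h] at this
  have parta : ∀ a ∈ c, ∃ b ∈ c, b ∈ B ∧ b ≤ a := by
    intro a ha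
    have h1 : Ll C b0 ⊤ := by
      intro h
      rw [compl_top] at h
      exact absurd (hC2 _ _ h).2 (lt_irrefl ⊥)
    obtain ⟨d, hdB, hb0d, -⟩ := hBC1 b0 ⊤ hb0B h1
    have hdc : dᶜ ∉ c := by
      intro hdcc
      rcases hpair b0 hb0c dᶜ hdcc with h | h
      · exact hb0d h
      · exact h.1 hb0B
    have hE : ∃ e ∈ c, ¬ CAl C B dᶜ e := by
      by_contra h
      push_neg at h
      exact hdc (hmax dᶜ h)
    obtain ⟨e, hec, hne'⟩ := hE
    have hnCde : ¬ C dᶜ e := fun h => hne' (Or.inl h)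
    have hBor : dᶜ ∈ B ∨ e ∈ B := by
      by_contra h
      push_neg at h
      exact hne' (Or.inr h)
    have hsplit : a ⊓ d ∈ c ∨ a ⊓ dᶜ ∈ c := by
      apply hprime
      have : a ⊓ d ⊔ a ⊓ dᶜ = a := by
        rw [← inf_sup_left, sup_compl_eq_top, inf_top_eq]
      rwa [this]
    rcases hsplit with h | h
    · exact ⟨a ⊓ d, h, hIdown _ d hdB inf_le_right, inf_le_left⟩
    · exfalso
      rcases hpair _ h e hec with h2 | h2
      · exact hnCde (mono dᶜ e e le_rfl (hC3 _ _ (mono e dᶜ (a ⊓ dᶜ) inf_le_right (hC3 _ _ h2))))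
      · rcases hBor with hb | hb
        · exact h2.1 (hIdown _ _ hb inf_le_right)
        · exact h2.2 hb
  refine ⟨parta, fun a => ⟨fun hna => ?_, fun ⟨b, hbc, hbB, hll⟩ ha => ?_⟩⟩
  · have hE : ∃ e ∈ c, ¬ CAl C B a e := by
      by_contra h
      push_neg at h
      exact hna (hmax a h)
    obtain ⟨e, hec, hne'⟩ := hE
    have hnCae : ¬ C a e := fun h => hne' (Or.inl h)
    obtain ⟨b, hbc, hbB, hble⟩ := parta e hec
    refine ⟨b, hbc, hbB, ?_⟩
    rw [Ll, compl_compl]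
    intro h
    exact hnCae (mono a e b hble (hC3 _ _ h))
  · rcases hpair a ha b hbc with h | h
    · rw [Ll, compl_compl] at hll
      exact hll (hC3 _ _ h)
    · exact h.2 hbB
end

section
/- Let (A, ⌢, 𝔹) be a local contact algebra and 𝔲 a bounded ultrafilter in A (i.e., 𝔲 ∩ 𝔹 ≠ ∅). Then {a ∈ A | a ⌢ b for all b ∈ 𝔲} = {a ∈ A | a ⌢_Al b for all b ∈ 𝔲}, i.e., the cluster 𝔠_𝔲 can be computed using ⌢ instead of its Alexandroff extension ⌢_Al. -/
/-- for a bounded ultrafilter `𝔲` in a local contact algebra,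
the cluster `𝔠_𝔲` can be computed with `⌢` instead of `⌢_Al`. -/
theorem cluster_of_bounded_ultrafilter {A : Type*} [BooleanAlgebra A]
    (C : A → A → Prop) (B : Set A) (hL : LCAx C B)
    (u : Set A) (hu : IsUltra u) (hb : ∃ b ∈ u, b ∈ B) :
    {a : A | ∀ b ∈ u, C a b} = {a : A | ∀ b ∈ u, CAl C B a b} := by
  obtain ⟨b₀, hb₀u, hb₀B⟩ := hb
  obtain ⟨hC, hI, -⟩ := hL
  obtain ⟨-, -, -, hC4⟩ := hC
  obtain ⟨-, hdown, -⟩ := hI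
  obtain ⟨-, -, hinf, -⟩ := hu
  ext a
  simp only [Set.mem_setOf_eq]
  constructor
  · intro h b hbu
    exact Or.inl (h b hbu)
  · intro h b hbu
    have hmem : b ⊓ b₀ ∈ u := hinf b b₀ hbu hb₀u
    have hBmem : b ⊓ b₀ ∈ B := hdown (b ⊓ b₀) b₀ hb₀B inf_le_right
    have := h (b ⊓ b₀) hmem
    rcases this with hc | ⟨-, hnB⟩
    · -- monotonicity: b ⊓ b₀ ≤ b, C a (b ⊓ b₀) → C a b
      have hle : b = (b ⊓ b₀) ⊔ b := (sup_eq_right.mpr inf_le_left).symm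
      rw [hle]
      exact (hC4 a (b ⊓ b₀) b).mpr (Or.inl hc)
    · exact absurd hBmem hnB
end

section
/- Let (A, ⌢, 𝔹) be a local contact algebra and let 𝔲, 𝔳 be bounded ultrafilters in A. Then 𝔲 ⌢ 𝔳 (in the ultrafilter extension of ⌢) if and only if 𝔠_𝔲 = 𝔠_𝔳. -/
/-- for bounded ultrafilters `𝔲, 𝔳` in a local contact algebra,
`𝔲 ⌢ 𝔳` iff `𝔠_𝔲 = 𝔠_𝔳` (clusters generated in `(A, ⌢_Al)`). -/
theorem bounded_ultrafilters_contact_iff_cluster_eq {A : Type*} [BooleanAlgebra A]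
    (C : A → A → Prop) (B : Set A) (hL : LCAx C B)
    (u v : Set A) (hu : IsUltra u) (hv : IsUltra v)
    (hub : ∃ b ∈ u, b ∈ B) (hvb : ∃ b ∈ v, b ∈ B) :
    (∀ c ∈ u, ∀ d ∈ v, C c d) ↔
      {a : A | ∀ b ∈ u, CAl C B a b} = {a : A | ∀ b ∈ v, CAl C B a b} := by
  obtain ⟨⟨hC1, hC2, hC3, hC4⟩, ⟨hB0, hBdown, hBsup⟩, hBC1, hBC2, hBC3⟩ := hL
  have mono2 : ∀ a b b' : A, C a b → b ≤ b' → C a b' := by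
    intro a b b' h hle
    have := (hC4 a b b').mpr (Or.inl h)
    rwa [sup_eq_right.mpr hle] at this
  have mono1 : ∀ a a' b : A, C a b → a ≤ a' → C a' b := by
    intro a a' b h hle
    exact hC3 _ _ (mono2 _ _ _ (hC3 _ _ h) hle)
  constructor
  · intro h
    have key : ∀ (u' v' : Set A), IsUltra u' → (∀ c ∈ u', ∀ d ∈ v', C c d) →
        {a : A | ∀ b ∈ u', CAl C B a b} ⊆ {a : A | ∀ b ∈ v', CAl C B a b} := by
      intro u' v' hu' huv a ha d hd
      rcases (hu'.2.2.2 d) with hdu | hdcu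
      · exact ha d hdu
      by_contra hnc
      have hnCad : ¬ C a d := fun hc => hnc (Or.inl hc)
      have hmem : a ∈ B ∨ d ∈ B := by
        by_contra hc
        push_neg at hc
        exact hnc (Or.inr ⟨hc.1, hc.2⟩)
      rcases hmem with haB | hdB
      · -- a ∈ B : interpolate a ≪ dᶜ
        have hLl : Ll C a dᶜ := by
          simp only [Ll, compl_compl]
          exact hnCad
        obtain ⟨b, hbB, hab, hbd⟩ := hBC1 a dᶜ haB hLl
        rcases (hu'.2.2.2 b) with hbu | hbcu
        · -- b ∈ u' : C b d from huv, contradicting Ll b dᶜ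
          have : C b d := huv b hbu d hd
          simp only [Ll, compl_compl] at hbd
          exact hbd this
        · -- bᶜ ∈ u' : CAl a bᶜ forces C a bᶜ since a ∈ B, contradicting Ll a b
          have := ha bᶜ hbcu
          rcases this with hc | ⟨ha', _⟩
          · exact hab hc
          · exact ha' haB
      · -- d ∈ B : interpolate d ≪ aᶜ
        have hLl : Ll C d aᶜ := by
          simp only [Ll, compl_compl]
          exact fun hc => hnCad (hC3 _ _ hc)
        obtain ⟨b, hbB, hdb, hba⟩ := hBC1 d aᶜ hdB hLl
        rcases (hu'.2.2.2 b) with hbu | hbcu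
        · -- b ∈ u' : CAl a b forces C a b since b ∈ B, contradicting Ll b aᶜ
          have := ha b hbu
          rcases this with hc | ⟨_, hb'⟩
          · simp only [Ll, compl_compl] at hba
            exact hba (hC3 _ _ hc)
          · exact hb' hbB
        · -- bᶜ ∈ u' : C bᶜ d from huv, contradicting Ll d b
          have : C bᶜ d := huv bᶜ hbcu d hd
          exact hdb (hC3 _ _ this)
    exact Set.Subset.antisymm (key u v hu h)
      (key v u hv (fun c hc d hd => hC3 _ _ (h d hd c hc)))
  · intro h c hc d hd
    obtain ⟨b0, hb0u, hb0B⟩ := hub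
    have hcb0 : c ⊓ b0 ∈ u := hu.2.2.1 _ _ hc hb0u
    have hcB : c ⊓ b0 ∈ B := hBdown _ _ hb0B inf_le_right
    have hcin : (c ⊓ b0) ∈ {a : A | ∀ b ∈ u, CAl C B a b} := by
      intro b hb
      have hmem : (c ⊓ b0) ⊓ b ∈ u := hu.2.2.1 _ _ hcb0 hb
      have hne : ⊥ < (c ⊓ b0) ⊓ b := by
        rcases eq_or_ne ((c ⊓ b0) ⊓ b) ⊥ with hbot | hbot
        · exact absurd (hbot ▸ hmem) hu.1
        · exact bot_lt_iff_ne_bot.mpr hbot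
      exact Or.inl (mono1 _ _ _ (mono2 _ _ _ (hC1 _ hne) inf_le_right) inf_le_left)
    rw [h] at hcin
    rcases hcin d hd with hCd | ⟨hc', _⟩
    · exact mono1 _ _ _ hCd inf_le_left
    · exact absurd hcB hc'
end

section
/- Let (A, ⌢, 𝔹) be a local contact algebra. The extension of the contact relation ⌢ to ultrafilters (𝔲 ⌢ 𝔳 iff c ⌢ d for all c ∈ 𝔲, d ∈ 𝔳) is an equivalence relation on the set BUlt(A) of bounded ultrafilters of A. -/
/-- in a local contact algebra, the extension of `⌢` to
ultrafilters is an equivalence relation on the set of bounded ultrafilters. -/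
theorem bounded_ultrafilter_contact_equivalence {A : Type*} [BooleanAlgebra A]
    (C : A → A → Prop) (B : Set A) (hL : LCAx C B) :
    Equivalence (fun u v : {s : Set A // IsUltra s ∧ ∃ b ∈ s, b ∈ B} =>
      ∀ c ∈ u.1, ∀ d ∈ v.1, C c d) := by
  obtain ⟨⟨hC1, hC2, hC3, hC4⟩, hIdeal, hBC1, hBC2, hBC3⟩ := hL
  have mono : ∀ a b b' : A, C a b → b ≤ b' → C a b' := by
    intro a b b' h hle
    have h2 := (hC4 a b b').mpr (Or.inl h)
    rwa [sup_eq_right.mpr hle] at h2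
  constructor
  · rintro ⟨u, ⟨hbot, hup, hmeet, hult⟩, hb⟩
    intro c hc d hd
    have h1 : c ⊓ d ∈ u := hmeet c d hc hd
    have h2 : ⊥ < c ⊓ d := bot_lt_iff_ne_bot.mpr (fun h => hbot (h ▸ h1))
    exact hC3 _ _ (mono _ _ _ (hC3 _ _ (mono _ _ _ (hC1 _ h2) inf_le_right)) inf_le_left)
  · intro u v h c hc d hd
    exact hC3 _ _ (h d hd c hc)
  · rintro ⟨u, ⟨hbotu, hupu, hmeetu, hultu⟩, bu, hbuu, hbuB⟩ ⟨v, hv⟩ ⟨w, hw⟩ huv hvw c hc d hd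
    by_contra hcd
    have hm : c ⊓ bu ∈ B := hIdeal.2.1 _ _ hbuB inf_le_right
    have hmu : c ⊓ bu ∈ u := hmeetu _ _ hc hbuu
    have hll : Ll C (c ⊓ bu) dᶜ := by
      intro habs
      rw [compl_compl] at habs
      exact hcd (hC3 _ _ (mono _ _ _ (hC3 _ _ habs) inf_le_left))
    obtain ⟨e, heB, h1, h2⟩ := hBC1 _ _ hm hll
    have hev : e ∈ v := by
      rcases hv.1.2.2.2 e with h | h
      · exact h
      · exact absurd (huv _ hmu _ h) h1
    have h3 := hvw _ hev _ hd
    rw [Ll, compl_compl] at h2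
    exact h2 h3
end

section
/- Let (A, ⌢, 𝔹) be a local contact algebra and let Z = BUlt(A) be the set of bounded ultrafilters, viewed as a subspace of the Stone space Ult(A). Then: (a) b ∈ 𝔹 if and only if ε_A(b) ⊆ Z, where ε_A(b) = {𝔲 ∈ Ult(A) | b ∈ 𝔲}; and (b) Z is an open dense subset of Ult(A), hence a locally compact Hausdorff space. -/
/-- The Stone space of a Boolean algebra: the set of ultrafilters. -/
def UltS (A : Type*) [BooleanAlgebra A] : Type _ := {u : Set A // IsUltra u}

/-- The Stone topology, with the sets `ε_A(a) = {𝔲 | a ∈ 𝔲}` as an open base. -/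
instance UltS.topologicalSpace (A : Type*) [BooleanAlgebra A] :
    TopologicalSpace (UltS A) :=
  TopologicalSpace.generateFrom {S : Set (UltS A) | ∃ a : A, S = {u : UltS A | a ∈ u.1}}


section StoneAux

variable {A : Type*} [BooleanAlgebra A]

lemma contact_mono_right {C : A → A → Prop} (hC : ContactAx C) {a b b' : A}
    (h : C a b) (hbb : b ≤ b') : C a b' := by
  have h2 := (hC.2.2.2 a b b').2 (Or.inl h)
  rwa [sup_eq_right.mpr hbb] at h2

/-- Any "filter" disjoint from an ideal extends to an ultrafilter disjoint from it. -/
lemma exists_ultra_extend {B F : Set A} (hB : IsIdealSet B)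
    (hFne : F.Nonempty)
    (hFup : ∀ x y : A, x ∈ F → x ≤ y → y ∈ F)
    (hFinf : ∀ x y : A, x ∈ F → y ∈ F → x ⊓ y ∈ F)
    (hFB : ∀ x ∈ F, x ∉ B) :
    ∃ u : Set A, IsUltra u ∧ F ⊆ u ∧ ∀ x ∈ u, x ∉ B := by
  set S : Set (Set A) := {G | G.Nonempty ∧ (∀ x y : A, x ∈ G → x ≤ y → y ∈ G) ∧
    (∀ x y : A, x ∈ G → y ∈ G → x ⊓ y ∈ G) ∧ ∀ x ∈ G, x ∉ B} with hSdef
  have hFS : F ∈ S := ⟨hFne, hFup, hFinf, hFB⟩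
  obtain ⟨u, hFu, humax⟩ : ∃ m, F ⊆ m ∧ Maximal (· ∈ S) m := by
    refine zorn_subset_nonempty S ?_ F hFS
    intro c hcS hchain hcne
    obtain ⟨t, htc⟩ := hcne
    refine ⟨⋃₀ c, ⟨?_, ?_, ?_, ?_⟩, fun s hs => Set.subset_sUnion_of_mem hs⟩
    · obtain ⟨x, hx⟩ := (hcS htc).1
      exact ⟨x, t, htc, hx⟩
    · rintro x y ⟨G, hGc, hxG⟩ hxy
      exact ⟨G, hGc, (hcS hGc).2.1 x y hxG hxy⟩
    · rintro x y ⟨G, hGc, hxG⟩ ⟨G', hG'c, hyG'⟩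
      rcases hchain.total hGc hG'c with h | h
      · exact ⟨G', hG'c, (hcS hG'c).2.2.1 x y (h hxG) hyG'⟩
      · exact ⟨G, hGc, (hcS hGc).2.2.1 x y hxG (h hyG')⟩
    · rintro x ⟨G, hGc, hxG⟩
      exact (hcS hGc).2.2.2 x hxG
  have huS := humax.prop
  obtain ⟨hune, huup, huinf, huB⟩ := huS
  -- key: if a ∉ u then some x ∈ u has x ⊓ a ∈ B
  have key : ∀ a : A, a ∉ u → ∃ x ∈ u, x ⊓ a ∈ B := by
    intro a hau
    set G : Set A := {y | ∃ x ∈ u, x ⊓ a ≤ y} with hGdef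
    have huG : u ⊆ G := fun x hx => ⟨x, hx, inf_le_left⟩
    have haG : a ∈ G := by
      obtain ⟨x, hx⟩ := hune
      exact ⟨x, hx, inf_le_right⟩
    have hGne : G.Nonempty := ⟨a, haG⟩
    have hGup : ∀ x y : A, x ∈ G → x ≤ y → y ∈ G := by
      rintro x y ⟨z, hz, hzx⟩ hxy
      exact ⟨z, hz, hzx.trans hxy⟩
    have hGinf : ∀ x y : A, x ∈ G → y ∈ G → x ⊓ y ∈ G := by
      rintro x y ⟨z, hz, hzx⟩ ⟨w, hw, hwy⟩
      refine ⟨z ⊓ w, huinf z w hz hw, ?_⟩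
      refine le_inf (le_trans ?_ hzx) (le_trans ?_ hwy)
      · exact inf_le_inf_right a inf_le_left
      · exact inf_le_inf_right a inf_le_right
    by_contra hno
    push_neg at hno
    have hGB : ∀ y ∈ G, y ∉ B := by
      rintro y ⟨x, hx, hxy⟩ hyB
      exact hno x hx (hB.2.1 (x ⊓ a) y hyB hxy)
    have hGS : G ∈ S := ⟨hGne, hGup, hGinf, hGB⟩
    exact hau (humax.2 hGS huG haG)
  have hbotu : ⊥ ∉ u := fun h => huB ⊥ h hB.1
  refine ⟨u, ⟨hbotu, huup, huinf, ?_⟩, hFu, huB⟩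
  intro a
  by_contra hcon
  push_neg at hcon
  obtain ⟨ha, hac⟩ := hcon
  obtain ⟨x, hxu, hxB⟩ := key a ha
  obtain ⟨x', hx'u, hx'B⟩ := key aᶜ hac
  have hz : x ⊓ x' ∈ u := huinf x x' hxu hx'u
  have hle : x ⊓ x' ≤ (x ⊓ a) ⊔ (x' ⊓ aᶜ) := by
    have h1 : x ⊓ x' = ((x ⊓ x') ⊓ a) ⊔ ((x ⊓ x') ⊓ aᶜ) := by
      rw [← inf_sup_left, sup_compl_eq_top, inf_top_eq]
    rw [h1]
    exact sup_le_sup (inf_le_inf_right a inf_le_left) (inf_le_inf_right aᶜ inf_le_right)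
  exact huB _ hz (hB.2.1 _ _ (hB.2.2 _ _ hxB hx'B) hle)

lemma eps_compl (a : A) :
    {v : UltS A | aᶜ ∈ v.1} = {v : UltS A | a ∈ v.1}ᶜ := by
  ext v
  simp only [Set.mem_setOf_eq, Set.mem_compl_iff]
  constructor
  · intro h ha
    exact v.2.1 (by simpa [inf_compl_eq_bot] using v.2.2.2.1 a aᶜ ha h)
  · intro h
    rcases v.2.2.2.2 a with h' | h'
    · exact absurd h' h
    · exact h'

lemma UltS.basic_isOpen (a : A) : IsOpen {v : UltS A | a ∈ v.1} :=
  TopologicalSpace.GenerateOpen.basic _ ⟨a, rfl⟩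

lemma UltS.basic_subset_of_open {U : Set (UltS A)}
    (hU : IsOpen U) :
    ∀ u ∈ U, ∃ a : A, a ∈ u.1 ∧ {v : UltS A | a ∈ v.1} ⊆ U := by
  have hU' : TopologicalSpace.GenerateOpen
      {S : Set (UltS A) | ∃ a : A, S = {u : UltS A | a ∈ u.1}} U := hU
  clear hU
  induction hU' with
  | basic S hS =>
    obtain ⟨a, rfl⟩ := hS
    exact fun u hu => ⟨a, hu, subset_rfl⟩
  | univ =>
    intro u _
    rcases u.2.2.2.2 ⊥ with h | h
    · exact absurd h u.2.1
    · exact ⟨⊥ᶜ, h, fun _ _ => trivial⟩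
  | inter U V _ _ ihU ihV =>
    intro u hu
    obtain ⟨a, ha, hai⟩ := ihU u hu.1
    obtain ⟨b, hb, hbi⟩ := ihV u hu.2
    refine ⟨a ⊓ b, u.2.2.2.1 a b ha hb, fun v hv => ?_⟩
    exact ⟨hai (v.2.2.1 _ _ hv inf_le_left), hbi (v.2.2.1 _ _ hv inf_le_right)⟩
  | sUnion S _ ih =>
    rintro u ⟨t, htS, hut⟩
    obtain ⟨a, ha, hsub⟩ := ih t htS u hut
    exact ⟨a, ha, hsub.trans (Set.subset_sUnion_of_mem htS)⟩

lemma UltS.le_nhds {f : Filter (UltS A)} {u : UltS A}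
    (h : ∀ a : A, a ∈ u.1 → {v : UltS A | a ∈ v.1} ∈ f) : f ≤ nhds u := by
  rw [show (UltS.topologicalSpace A) = TopologicalSpace.generateFrom
    {S : Set (UltS A) | ∃ a : A, S = {u : UltS A | a ∈ u.1}} from rfl,
    TopologicalSpace.nhds_generateFrom]
  refine le_iInf₂ fun s hs => ?_
  obtain ⟨hu, a, rfl⟩ := hs
  exact Filter.le_principal_iff.mpr (h a hu)

lemma UltS.compactSpace : CompactSpace (UltS A) := by
  refine ⟨isCompact_iff_ultrafilter_le_nhds.mpr fun f _ => ?_⟩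
  set u0 : Set A := {a | {v : UltS A | a ∈ v.1} ∈ f} with hu0
  have hbot : ⊥ ∉ u0 := by
    have : {v : UltS A | (⊥ : A) ∈ v.1} = ∅ := by
      ext v; simp only [Set.mem_setOf_eq, Set.mem_empty_iff_false, iff_false]
      exact v.2.1
    intro h
    rw [hu0, Set.mem_setOf_eq, this] at h
    exact f.empty_notMem h
  have hup : ∀ a b : A, a ∈ u0 → a ≤ b → b ∈ u0 := by
    intro a b ha hab
    exact Filter.mem_of_superset ha fun v hv => v.2.2.1 a b hv hab
  have hinf : ∀ a b : A, a ∈ u0 → b ∈ u0 → a ⊓ b ∈ u0 := by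
    intro a b ha hb
    exact Filter.mem_of_superset (Filter.inter_mem ha hb)
      fun v hv => v.2.2.2.1 a b hv.1 hv.2
  have htot : ∀ a : A, a ∈ u0 ∨ aᶜ ∈ u0 := by
    intro a
    rcases f.mem_or_compl_mem {v : UltS A | a ∈ v.1} with h | h
    · exact Or.inl h
    · right
      rw [hu0, Set.mem_setOf_eq, eps_compl]
      exact h
  refine ⟨⟨u0, hbot, hup, hinf, htot⟩, Set.mem_univ _, UltS.le_nhds fun a ha => ha⟩

lemma UltS.t2Space : T2Space (UltS A) := by
  constructor
  intro u v huv
  have hne : u.1 ≠ v.1 := fun h => huv (Subtype.ext h)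
  have hnsub : ¬ u.1 ⊆ v.1 := by
    intro hsub
    refine hne (Set.Subset.antisymm hsub fun a ha => ?_)
    rcases u.2.2.2.2 a with h | h
    · exact h
    · exact absurd (v.2.2.2.1 a aᶜ ha (hsub h))
        (by rw [inf_compl_eq_bot]; exact v.2.1)
  obtain ⟨a, hau, hav⟩ := Set.not_subset.mp hnsub
  have hacv : aᶜ ∈ v.1 := (v.2.2.2.2 a).resolve_left hav
  refine ⟨{w : UltS A | a ∈ w.1}, {w : UltS A | aᶜ ∈ w.1},
    UltS.basic_isOpen a, UltS.basic_isOpen aᶜ, hau, hacv, ?_⟩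
  rw [eps_compl]
  exact disjoint_compl_right

end StoneAux

/-- for a local contact algebra `(A, ⌢, 𝔹)`, with `Z = BUlt(A)`
the set of bounded ultrafilters inside the Stone space `Ult(A)`:
(a) `b ∈ 𝔹 ↔ ε_A(b) ⊆ Z`; (b) `Z` is open and dense in `Ult(A)`, and, as a
subspace, a locally compact Hausdorff space. -/
theorem bounded_ultrafilters_open_dense {A : Type*} [BooleanAlgebra A]
    (C : A → A → Prop) (B : Set A) (hL : LCAx C B) :
    (∀ b : A, b ∈ B ↔
      {u : UltS A | b ∈ u.1} ⊆ {u : UltS A | ∃ b' ∈ B, b' ∈ u.1}) ∧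
    IsOpen {u : UltS A | ∃ b ∈ B, b ∈ u.1} ∧
    Dense {u : UltS A | ∃ b ∈ B, b ∈ u.1} ∧
    LocallyCompactSpace {u : UltS A // ∃ b ∈ B, b ∈ u.1} ∧
    T2Space {u : UltS A // ∃ b ∈ B, b ∈ u.1} := by
  obtain ⟨hC, hB, _, _, hBC3⟩ := hL
  have hIic : IsIdealSet (Set.Iic (⊥ : A)) :=
    ⟨le_refl ⊥, fun a b hb hab => hab.trans hb, fun a b ha hb => sup_le ha hb⟩
  -- part (a)
  have parta : ∀ b : A, b ∈ B ↔
      {u : UltS A | b ∈ u.1} ⊆ {u : UltS A | ∃ b' ∈ B, b' ∈ u.1} := by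
    intro b
    constructor
    · intro hb u hu
      exact ⟨b, hb, hu⟩
    · intro hsub
      by_contra hbB
      obtain ⟨u, hu, hFu, huB⟩ := exists_ultra_extend (B := B) (F := Set.Ici b) hB
        ⟨b, le_refl b⟩ (fun x y hx hxy => le_trans hx hxy)
        (fun x y hx hy => le_inf hx hy)
        (fun x hx hxB => hbB (hB.2.1 b x hxB hx))
      have hmem : (⟨u, hu⟩ : UltS A) ∈ {u : UltS A | b ∈ u.1} := hFu (le_refl b)
      obtain ⟨b', hb'B, hb'u⟩ := hsub hmem
      exact huB b' hb'u hb'B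
  -- openness
  have hZeq : {u : UltS A | ∃ b ∈ B, b ∈ u.1} = ⋃ b ∈ B, {u : UltS A | b ∈ u.1} := by
    ext u; simp
  have hopen : IsOpen {u : UltS A | ∃ b ∈ B, b ∈ u.1} := by
    rw [hZeq]
    exact isOpen_biUnion fun b _ => UltS.basic_isOpen b
  -- density
  have hdense : Dense {u : UltS A | ∃ b ∈ B, b ∈ u.1} := by
    rw [dense_iff_inter_open]
    rintro U hU ⟨u, hu⟩
    obtain ⟨a, hau, hsub⟩ := UltS.basic_subset_of_open hU u hu
    have hapos : ⊥ < a := bot_lt_iff_ne_bot.mpr fun h => u.2.1 (h ▸ hau)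
    obtain ⟨b, hbB, hbpos, hbLl⟩ := hBC3 a hapos
    have hba : b ≤ a := by
      by_contra hba
      have h1 : b ⊓ aᶜ ≠ ⊥ := fun h => hba (sdiff_eq_bot_iff.mp (by rwa [sdiff_eq]))
      have h2 : C (b ⊓ aᶜ) (b ⊓ aᶜ) := hC.1 _ (bot_lt_iff_ne_bot.mpr h1)
      have h3 : C (b ⊓ aᶜ) aᶜ := contact_mono_right hC h2 inf_le_right
      have h4 : C aᶜ b := contact_mono_right hC (hC.2.2.1 _ _ h3) inf_le_left
      exact hbLl (hC.2.2.1 _ _ h4)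
    obtain ⟨v, hv, hFv, _⟩ := exists_ultra_extend (B := Set.Iic ⊥) (F := Set.Ici b) hIic
      ⟨b, le_refl b⟩ (fun x y hx hxy => le_trans hx hxy)
      (fun x y hx hy => le_inf hx hy)
      (fun x hx hxB => absurd (le_antisymm (hx.trans hxB) bot_le)
        (ne_bot_of_gt hbpos))
    refine ⟨⟨v, hv⟩, hsub ?_, b, hbB, hFv (le_refl b)⟩
    exact hv.2.1 b a (hFv (le_refl b)) hba
  haveI : CompactSpace (UltS A) := UltS.compactSpace
  haveI : T2Space (UltS A) := UltS.t2Space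
  haveI : LocallyCompactSpace (UltS A) := inferInstance
  exact ⟨parta, hopen, hdense, hopen.locallyCompactSpace, inferInstance⟩
end

section
/- Let (A, ⌢, 𝔹) be a local contact algebra, Z = BUlt(A) ⊆ Ult(A) the subspace of bounded ultrafilters, and p_A : Z → Z/⌢ the quotient map by the equivalence relation given by contact of ultrafilters. Then p_A is a perfect irreducible map and the quotient space Z/⌢ is a locally compact Hausdorff space. -/
namespace LCAAux
variable {A : Type*} [BooleanAlgebra A]

theorem ultra_top {u : Set A} (hu : IsUltra u) : ⊤ ∈ u := by
  rcases hu.2.2.2 ⊤ with h | h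
  · exact h
  · exact absurd (by simpa using h) hu.1

theorem ultra_not_mem_iff {u : Set A} (hu : IsUltra u) {a : A} : a ∉ u ↔ aᶜ ∈ u := by
  constructor
  · intro h; rcases hu.2.2.2 a with h' | h'
    · exact absurd h' h
    · exact h'
  · intro h ha
    have := hu.2.2.1 a aᶜ ha h
    rw [inf_compl_eq_bot] at this
    exact hu.1 this

theorem ultra_finset_inf {ι : Type*} {u : Set A} (hu : IsUltra u) (t : Finset ι) (f : ι → A)
    (h : ∀ i ∈ t, f i ∈ u) : t.inf f ∈ u := by
  classical
  induction t using Finset.cons_induction with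
  | empty => simpa using ultra_top hu
  | cons a t ha ih =>
    rw [Finset.inf_cons]
    exact hu.2.2.1 _ _ (h a (Finset.mem_cons_self a t))
      (ih fun i hi => h i (Finset.mem_cons_of_mem hi))

def IsFilt (f : Set A) : Prop :=
  ⊥ ∉ f ∧ ⊤ ∈ f ∧ (∀ a b : A, a ∈ f → a ≤ b → b ∈ f) ∧ ∀ a b : A, a ∈ f → b ∈ f → a ⊓ b ∈ f

theorem exists_ultra {f : Set A} (hf : IsFilt f) : ∃ u : Set A, IsUltra u ∧ f ⊆ u := by
  have hchaincond : ∀ c ⊆ {g : Set A | IsFilt g ∧ f ⊆ g}, IsChain (· ⊆ ·) c → c.Nonempty →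
      ∃ ub ∈ {g : Set A | IsFilt g ∧ f ⊆ g}, ∀ s ∈ c, s ⊆ ub := by
    intro c hcS hchain hcne
    obtain ⟨g0, hg0⟩ := hcne
    refine ⟨⋃₀ c, ⟨⟨?_, ?_, ?_, ?_⟩, ?_⟩, fun s hs => Set.subset_sUnion_of_mem hs⟩
    · rintro ⟨g, hg, hbot⟩
      exact (hcS hg).1.1 hbot
    · exact ⟨g0, hg0, (hcS hg0).1.2.1⟩
    · rintro x y ⟨g, hg, hx⟩ hxy
      exact ⟨g, hg, (hcS hg).1.2.2.1 x y hx hxy⟩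
    · rintro x y ⟨g, hg, hx⟩ ⟨g', hg', hy⟩
      rcases hchain.total hg hg' with h | h
      · exact ⟨g', hg', (hcS hg').1.2.2.2 x y (h hx) hy⟩
      · exact ⟨g, hg, (hcS hg).1.2.2.2 x y hx (h hy)⟩
    · exact (hcS hg0).2.trans (Set.subset_sUnion_of_mem hg0)
  obtain ⟨m, hfm, hmS, hmax⟩ :=
    zorn_subset_nonempty {g : Set A | IsFilt g ∧ f ⊆ g} hchaincond f ⟨hf, subset_rfl⟩
  refine ⟨m, ⟨hmS.1.1, hmS.1.2.2.1, hmS.1.2.2.2, ?_⟩, hmS.2⟩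
  intro a
  by_contra hcon
  push_neg at hcon
  have hx : ∃ x ∈ m, x ⊓ a = ⊥ := by
    by_contra hno
    push_neg at hno
    set m' : Set A := {y | ∃ x ∈ m, x ⊓ a ≤ y} with hm'def
    have hm' : IsFilt m' := by
      refine ⟨?_, ⟨⊤, hmS.1.2.1, le_top⟩, ?_, ?_⟩
      · rintro ⟨x, hx, hle⟩
        exact hno x hx (le_bot_iff.mp hle)
      · rintro y z ⟨x, hx, hle⟩ hyz
        exact ⟨x, hx, hle.trans hyz⟩
      · rintro y z ⟨x, hx, hle⟩ ⟨x', hx', hle'⟩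
        refine ⟨x ⊓ x', hmS.1.2.2.2 x x' hx hx', ?_⟩
        refine le_inf ?_ ?_
        · exact le_trans (inf_le_inf_right a (inf_le_left)) hle
        · exact le_trans (inf_le_inf_right a (inf_le_right)) hle'
    have hsub : m ⊆ m' := fun x hx => ⟨x, hx, inf_le_left⟩
    have hsub' : m' ⊆ m := hmax ⟨hm', hmS.2.trans hsub⟩ hsub
    exact hcon.1 (hsub' ⟨⊤, hmS.1.2.1, by simpa using le_rfl⟩)
  obtain ⟨x, hxm, hxa⟩ := hx
  have hle : x ≤ aᶜ := le_compl_iff_disjoint_right.mpr (disjoint_iff.mpr hxa)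
  exact hcon.2 (hmS.1.2.2.1 x aᶜ hxm hle)

theorem exists_ultra_mem {a : A} (ha : a ≠ ⊥) : ∃ u : Set A, IsUltra u ∧ a ∈ u := by
  have hf : IsFilt {x : A | a ≤ x} :=
    ⟨fun h => ha (le_bot_iff.mp h), le_top, fun x y hx hxy => hx.trans hxy,
      fun x y hx hy => le_inf hx hy⟩
  obtain ⟨u, hu, hsub⟩ := exists_ultra hf
  exact ⟨u, hu, hsub le_rfl⟩

end LCAAux

namespace LCAAux
variable {A : Type*} [BooleanAlgebra A]

def E (a : A) : Set (UltS A) := {u : UltS A | a ∈ u.1}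

theorem isOpen_E (a : A) : IsOpen (E (A := A) a) :=
  TopologicalSpace.GenerateOpen.basic _ ⟨a, rfl⟩

theorem exists_basic {U : Set (UltS A)} (hU : IsOpen U) :
    ∀ u ∈ U, ∃ a : A, a ∈ u.1 ∧ E a ⊆ U := by
  have hU' : TopologicalSpace.GenerateOpen
      {S : Set (UltS A) | ∃ a : A, S = {u : UltS A | a ∈ u.1}} U := hU
  clear hU
  induction hU' with
  | basic S hS =>
    obtain ⟨a, rfl⟩ := hS
    exact fun u hu => ⟨a, hu, subset_rfl⟩
  | univ => exact fun u _ => ⟨⊤, ultra_top u.2, fun _ _ => trivial⟩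
  | inter S T hS hT ihS ihT =>
    rintro u ⟨huS, huT⟩
    obtain ⟨a, ha, haS⟩ := ihS u huS
    obtain ⟨b, hb, hbT⟩ := ihT u huT
    refine ⟨a ⊓ b, u.2.2.2.1 a b ha hb, fun w hw => ?_⟩
    exact ⟨haS (w.2.2.1 _ _ hw inf_le_left), hbT (w.2.2.1 _ _ hw inf_le_right)⟩
  | sUnion 𝒮 h ih =>
    rintro u ⟨S, hSm, huS⟩
    obtain ⟨a, ha, haS⟩ := ih S hSm u huS
    exact ⟨a, ha, haS.trans (Set.subset_sUnion_of_mem hSm)⟩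

theorem isCompact_E (b : A) : IsCompact (E (A := A) b) := by
  classical
  refine isCompact_of_finite_subcover ?_
  intro ι U hUo hcov
  have hch : ∀ u : {u : UltS A // u ∈ E b}, ∃ (a : A) (i : ι), a ∈ u.1.1 ∧ E a ⊆ U i := by
    intro u
    obtain ⟨i, hi⟩ := Set.mem_iUnion.mp (hcov u.2)
    obtain ⟨a, ha, haU⟩ := exists_basic (hUo i) u.1 hi
    exact ⟨a, i, ha, haU⟩
  choose a i ha hsub using hch
  suffices h : ∃ t : Finset {u : UltS A // u ∈ E b}, E b ⊆ ⋃ u ∈ t, E (a u) by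
    obtain ⟨t, ht⟩ := h
    refine ⟨t.image i, fun w hw => ?_⟩
    obtain ⟨u, hu, hw'⟩ := Set.mem_iUnion₂.mp (ht hw)
    exact Set.mem_iUnion₂.mpr ⟨i u, Finset.mem_image_of_mem i hu, hsub u hw'⟩
  by_contra hno
  push_neg at hno
  set g : {u : UltS A // u ∈ E b} → A := fun u => (a u)ᶜ with hg
  have hwit : ∀ t : Finset {u : UltS A // u ∈ E b},
      ∃ w : UltS A, b ∈ w.1 ∧ ∀ u ∈ t, (a u)ᶜ ∈ w.1 := by
    intro t
    obtain ⟨w, hwb, hwn⟩ := Set.not_subset.mp (hno t)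
    refine ⟨w, hwb, fun u hu => ?_⟩
    have hnm : a u ∉ w.1 := fun h => hwn (Set.mem_iUnion₂.mpr ⟨u, hu, h⟩)
    exact (ultra_not_mem_iff w.2).mp hnm
  have hne : ∀ t : Finset {u : UltS A // u ∈ E b}, b ⊓ t.inf g ≠ ⊥ := by
    intro t h
    obtain ⟨w, hwb, hwn⟩ := hwit t
    have hmem : b ⊓ t.inf g ∈ w.1 := w.2.2.2.1 _ _ hwb (ultra_finset_inf w.2 t g hwn)
    rw [h] at hmem
    exact w.2.1 hmem
  have hfil : IsFilt {x : A | ∃ t : Finset {u : UltS A // u ∈ E b}, b ⊓ t.inf g ≤ x} := by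
    refine ⟨?_, ⟨∅, le_top⟩, ?_, ?_⟩
    · rintro ⟨t, hle⟩
      exact hne t (le_bot_iff.mp hle)
    · rintro x y ⟨t, hle⟩ hxy
      exact ⟨t, hle.trans hxy⟩
    · rintro x y ⟨t1, h1⟩ ⟨t2, h2⟩
      refine ⟨t1 ∪ t2, ?_⟩
      rw [Finset.inf_union, inf_inf_distrib_left]
      exact inf_le_inf h1 h2
  obtain ⟨w, hwu, hfw⟩ := exists_ultra hfil
  have hbw : b ∈ w := hfw ⟨∅, inf_le_left⟩
  have hp : (⟨w, hwu⟩ : UltS A) ∈ E b := hbw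
  set q : {u : UltS A // u ∈ E b} := ⟨⟨w, hwu⟩, hp⟩ with hq
  have haq : a q ∈ w := ha q
  have hacq : (a q)ᶜ ∈ w := hfw ⟨{q}, by simp [g]⟩
  have hmeet := hwu.2.2.1 _ _ haq hacq
  rw [inf_compl_eq_bot] at hmeet
  exact hwu.1 hmeet

end LCAAux

namespace LCAAux
variable {A : Type*} [BooleanAlgebra A] {C : A → A → Prop} {B : Set A}

/-- contact is monotone on the right -/
theorem c_mono_right (hC : ContactAx C) {a b b' : A} (h : C a b) (hb : b ≤ b') : C a b' := by
  have := (hC.2.2.2 a b b').mpr (Or.inl h)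
  rwa [sup_eq_right.mpr hb] at this

theorem c_mono_left (hC : ContactAx C) {a a' b : A} (h : C a b) (ha : a ≤ a') : C a' b :=
  hC.2.2.1 _ _ (c_mono_right hC (hC.2.2.1 _ _ h) ha)

/-- any two members of an ultrafilter are in contact -/
theorem ultra_c (hC : ContactAx C) {u : Set A} (hu : IsUltra u) {a b : A}
    (ha : a ∈ u) (hb : b ∈ u) : C a b := by
  have hm : a ⊓ b ∈ u := hu.2.2.1 a b ha hb
  have hne : a ⊓ b ≠ ⊥ := fun h => hu.1 (h ▸ hm)
  have : C (a ⊓ b) (a ⊓ b) := hC.1 _ (bot_lt_iff_ne_bot.mpr hne)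
  exact c_mono_left hC (c_mono_right hC this inf_le_right) inf_le_left

theorem ll_top (hC : ContactAx C) (b : A) : Ll C b ⊤ := by
  intro h
  rw [compl_top] at h
  exact lt_irrefl ⊥ (hC.2.1 b ⊥ h).2

/-- relation of ultrafilters by contact -/
def Rel (C : A → A → Prop) (B : Set A) (u v : {u : UltS A // ∃ b ∈ B, b ∈ u.1}) : Prop :=
  ∀ c ∈ u.1.1, ∀ d ∈ v.1.1, C c d

theorem rel_symm (hC : ContactAx C) {u v : {u : UltS A // ∃ b ∈ B, b ∈ u.1}}
    (h : Rel C B u v) : Rel C B v u := fun c hc d hd => hC.2.2.1 _ _ (h d hd c hc)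

theorem rel_refl (hC : ContactAx C) (u : {u : UltS A // ∃ b ∈ B, b ∈ u.1}) : Rel C B u u :=
  fun c hc d hd => ultra_c hC u.1.2 hc hd

theorem mem_of_rel {u v : {u : UltS A // ∃ b ∈ B, b ∈ u.1}} (h : Rel C B u v) {a e : A}
    (ha : a ∈ u.1.1) (hae : Ll C a e) : e ∈ v.1.1 := by
  rcases v.1.2.2.2.2 e with he | he
  · exact he
  · exact absurd (h a ha eᶜ he) hae

/-- every bounded ultrafilter has a bounded "outer" element swallowing its class -/
theorem exists_bound (hL : LCAx C B) (u : {u : UltS A // ∃ b ∈ B, b ∈ u.1}) :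
    ∃ e ∈ B, ∀ v, Rel C B u v → e ∈ v.1.1 := by
  obtain ⟨b0, hb0B, hb0u⟩ := u.2
  obtain ⟨e, heB, hb0e, -⟩ := hL.2.2.1 b0 ⊤ hb0B (ll_top hL.1 b0)
  exact ⟨e, heB, fun v hv => mem_of_rel hv hb0u hb0e⟩

/-- separation of non-related bounded ultrafilters -/
theorem sep (hL : LCAx C B) {u v : {u : UltS A // ∃ b ∈ B, b ∈ u.1}}
    (h : ¬ Rel C B u v) : ∃ m : A, (∃ c' ∈ u.1.1, Ll C c' m) ∧ (∃ d ∈ v.1.1, Ll C d mᶜ) := by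
  rw [Rel] at h
  push_neg at h
  obtain ⟨c, hc, d, hd, hcd⟩ := h
  obtain ⟨b0, hb0B, hb0u⟩ := u.2
  have hc' : c ⊓ b0 ∈ u.1.1 := u.1.2.2.2.1 c b0 hc hb0u
  have hc'B : c ⊓ b0 ∈ B := hL.2.1.2.1 _ b0 hb0B inf_le_right
  have hncd : ¬ C (c ⊓ b0) d := fun hx => hcd (c_mono_left hL.1 hx inf_le_left)
  have hll : Ll C (c ⊓ b0) dᶜ := by
    rw [Ll, compl_compl]
    exact hncd
  obtain ⟨m, hmB, h1, h2⟩ := hL.2.2.1 _ _ hc'B hll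
  refine ⟨m, ⟨c ⊓ b0, hc', h1⟩, ⟨d, hd, ?_⟩⟩
  rw [Ll, compl_compl]
  intro hdm
  rw [Ll, compl_compl] at h2
  exact h2 (hL.1.2.2.1 _ _ hdm)

def EZ (B : Set A) (a : A) : Set {u : UltS A // ∃ b ∈ B, b ∈ u.1} := {u | a ∈ u.1.1}

theorem isOpen_EZ (a : A) : IsOpen (EZ (A := A) B a) := by
  have h : EZ B a = Subtype.val ⁻¹' (E a) := rfl
  rw [h]
  exact (isOpen_E a).preimage continuous_subtype_val

theorem exists_basicZ {U : Set {u : UltS A // ∃ b ∈ B, b ∈ u.1}} (hU : IsOpen U)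
    {u : {u : UltS A // ∃ b ∈ B, b ∈ u.1}} (hu : u ∈ U) :
    ∃ a : A, a ∈ u.1.1 ∧ EZ B a ⊆ U := by
  obtain ⟨V, hV, rfl⟩ := isOpen_induced_iff.mp hU
  obtain ⟨a, ha, haV⟩ := exists_basic hV u.1 hu
  exact ⟨a, ha, fun w hw => haV hw⟩

theorem isCompact_EZ {b : A} (hb : b ∈ B) : IsCompact (EZ (A := A) B b) := by
  have hind : Topology.IsInducing (Subtype.val : {u : UltS A // ∃ b ∈ B, b ∈ u.1} → UltS A) :=
    ⟨rfl⟩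
  rw [hind.isCompact_iff]
  have him : Subtype.val '' (EZ (A := A) B b) = E b := by
    ext u
    constructor
    · rintro ⟨w, hw, rfl⟩
      exact hw
    · intro hu
      exact ⟨⟨u, ⟨b, hb, hu⟩⟩, hu, rfl⟩
  rw [him]
  exact isCompact_E b

/-- saturations of closed sets are closed -/
theorem closed_sat (hL : LCAx C B) {F : Set {u : UltS A // ∃ b ∈ B, b ∈ u.1}}
    (hF : IsClosed F) : IsClosed {v | ∃ u ∈ F, Rel C B u v} := by
  classical
  rw [← isOpen_compl_iff, isOpen_iff_forall_mem_open]
  intro v hv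
  obtain ⟨b0, hb0B, hb0v⟩ := v.2
  obtain ⟨e, heB, hb0e, -⟩ := hL.2.2.1 b0 ⊤ hb0B (ll_top hL.1 b0)
  have hF0c : IsCompact (F ∩ EZ B e) := (isCompact_EZ heB).inter_left hF
  have hsep : ∀ u : {x // x ∈ F ∩ EZ B e},
      ∃ c' m : A, c' ∈ u.1.1.1 ∧ Ll C c' m ∧ (m)ᶜ ∈ v.1.1 := by
    intro u
    have hnr : ¬ Rel C B u.1 v := fun hr => hv ⟨u.1, u.2.1, hr⟩
    obtain ⟨m, ⟨c', hc', hll⟩, ⟨d, hd, hll'⟩⟩ := sep hL hnr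
    refine ⟨c', m, hc', hll, ?_⟩
    exact mem_of_rel (rel_refl hL.1 v) hd hll'
  choose c' m hc' hll hmv using hsep
  have hcov : (F ∩ EZ B e) ⊆ ⋃ u : {x // x ∈ F ∩ EZ B e}, EZ B (c' u) := by
    intro x hx
    exact Set.mem_iUnion.mpr ⟨⟨x, hx⟩, hc' ⟨x, hx⟩⟩
  obtain ⟨t, ht⟩ := hF0c.elim_finite_subcover _ (fun u => isOpen_EZ (c' u)) hcov
  set n : A := b0 ⊓ t.inf fun u => (m u)ᶜ with hn
  refine ⟨EZ B n, ?_, isOpen_EZ n, ?_⟩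
  · -- EZ B n avoids the saturation
    rintro w hw ⟨u0, hu0F, hrel⟩
    have hnw : n ∈ w.1.1 := hw
    have hb0w : b0 ∈ w.1.1 := w.1.2.2.1 _ _ hnw inf_le_left
    have heu0 : e ∈ u0.1.1 := mem_of_rel (rel_symm hL.1 hrel) hb0w hb0e
    have hu0F0 : u0 ∈ F ∩ EZ B e := ⟨hu0F, heu0⟩
    obtain ⟨i, hit, hi⟩ := Set.mem_iUnion₂.mp (ht hu0F0)
    have hmw : m i ∈ w.1.1 := mem_of_rel hrel (hi : c' i ∈ u0.1.1) (hll i)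
    have hmcw : (m i)ᶜ ∈ w.1.1 := by
      refine w.1.2.2.1 _ _ hnw (le_trans inf_le_right ?_)
      exact Finset.inf_le hit
    have := w.1.2.2.2.1 _ _ hmw hmcw
    rw [inf_compl_eq_bot] at this
    exact w.1.2.1 this
  · -- v ∈ EZ B n
    refine v.1.2.2.2.1 _ _ hb0v (ultra_finset_inf v.1.2 t _ fun i _ => hmv i)

end LCAAux

/-- for a local contact algebra `(A, ⌢, 𝔹)`, with `Z = BUlt(A)` the
subspace of bounded ultrafilters of the Stone space and `s` the equivalence
relation on `Z` given by contact of ultrafilters, the quotient map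
`p_A : Z → Z/⌢` is a perfect irreducible (continuous, surjective) map and the
quotient space `Z/⌢` is locally compact Hausdorff. -/
theorem quotient_map_perfect_irreducible {A : Type*} [BooleanAlgebra A]
    (C : A → A → Prop) (B : Set A) (hL : LCAx C B)
    (s : Setoid {u : UltS A // ∃ b ∈ B, b ∈ u.1})
    (hs : ∀ u v : {u : UltS A // ∃ b ∈ B, b ∈ u.1},
      s.r u v ↔ ∀ c ∈ u.1.1, ∀ d ∈ v.1.1, C c d) :
    Continuous (Quotient.mk s) ∧
    Function.Surjective (Quotient.mk s) ∧
    IsClosedMap (Quotient.mk s) ∧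
    (∀ y : Quotient s, IsCompact ((Quotient.mk s) ⁻¹' {y})) ∧
    (∀ F : Set {u : UltS A // ∃ b ∈ B, b ∈ u.1},
      IsClosed F → (Quotient.mk s) '' F = Set.univ → F = Set.univ) ∧
    LocallyCompactSpace (Quotient s) ∧
    T2Space (Quotient s) := by

  classical
  have key : ∀ u v : {u : UltS A // ∃ b ∈ B, b ∈ u.1},
      Quotient.mk s u = Quotient.mk s v ↔ LCAAux.Rel C B u v := by
    intro u v
    constructor
    · intro h; exact (hs u v).mp (Quotient.exact h)
    · intro h; exact Quot.sound ((hs u v).mpr h)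
  have hcont : Continuous (Quotient.mk s) := continuous_quot_mk
  have hsurj : Function.Surjective (Quotient.mk s) := fun y => Quotient.exists_rep y
  have hclosed : IsClosedMap (Quotient.mk s) := by
    intro F hF
    have hpre : Quotient.mk s ⁻¹' (Quotient.mk s '' F) =
        {v | ∃ u ∈ F, LCAAux.Rel C B u v} := by
      ext v
      simp only [Set.mem_preimage, Set.mem_image, Set.mem_setOf_eq]
      constructor
      · rintro ⟨u, hu, h⟩; exact ⟨u, hu, (key u v).mp h⟩
      · rintro ⟨u, hu, h⟩; exact ⟨u, hu, (key u v).mpr h⟩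
    have hcl : IsClosed (Quotient.mk s ⁻¹' (Quotient.mk s '' F)) := by
      rw [hpre]; exact LCAAux.closed_sat hL hF
    exact isQuotientMap_quot_mk.isClosed_preimage.mp hcl
  haveI hT2Z : T2Space {u : UltS A // ∃ b ∈ B, b ∈ u.1} := by
    constructor
    intro x y hxy
    have hne : x.1.1 ≠ y.1.1 := fun h => hxy (Subtype.ext (Subtype.ext h))
    obtain ⟨a, ha⟩ := not_forall.mp (fun h => hne (Set.ext h))
    by_cases hax : a ∈ x.1.1
    · have hay : a ∉ y.1.1 := fun h => ha ⟨fun _ => h, fun _ => hax⟩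
      refine ⟨LCAAux.EZ B a, LCAAux.EZ B aᶜ, LCAAux.isOpen_EZ a, LCAAux.isOpen_EZ aᶜ,
        hax, (LCAAux.ultra_not_mem_iff y.1.2).mp hay, Set.disjoint_left.mpr ?_⟩
      intro w hw hw'
      have := w.1.2.2.2.1 _ _ hw hw'
      rw [inf_compl_eq_bot] at this
      exact w.1.2.1 this
    · have hay : a ∈ y.1.1 := by
        by_contra h
        exact ha ⟨fun h' => absurd h' hax, fun h' => absurd h' h⟩
      refine ⟨LCAAux.EZ B aᶜ, LCAAux.EZ B a, LCAAux.isOpen_EZ aᶜ, LCAAux.isOpen_EZ a,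
        (LCAAux.ultra_not_mem_iff x.1.2).mp hax, hay, Set.disjoint_left.mpr ?_⟩
      intro w hw hw'
      have := w.1.2.2.2.1 _ _ hw' hw
      rw [inf_compl_eq_bot] at this
      exact w.1.2.1 this
  have hfiber : ∀ y : Quotient s, IsCompact ((Quotient.mk s) ⁻¹' {y}) := by
    intro y
    obtain ⟨u, rfl⟩ := hsurj y
    have heq : Quotient.mk s ⁻¹' {Quotient.mk s u} =
        {w | ∃ u' ∈ ({u} : Set {u : UltS A // ∃ b ∈ B, b ∈ u.1}), LCAAux.Rel C B u' w} := by
      ext w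
      simp only [Set.mem_preimage, Set.mem_singleton_iff, Set.mem_setOf_eq,
        Set.mem_singleton_iff, exists_eq_left]
      constructor
      · intro h; exact (key u w).mp h.symm
      · intro h; exact ((key u w).mpr h).symm
    obtain ⟨e, heB, he⟩ := LCAAux.exists_bound hL u
    rw [heq]
    refine (LCAAux.isCompact_EZ heB).of_isClosed_subset
      (LCAAux.closed_sat hL isClosed_singleton) ?_
    rintro w ⟨u', hu', hr⟩
    rw [Set.mem_singleton_iff] at hu'
    subst hu'
    exact he w hr
  have hirr : ∀ F : Set {u : UltS A // ∃ b ∈ B, b ∈ u.1},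
      IsClosed F → (Quotient.mk s) '' F = Set.univ → F = Set.univ := by
    intro F hF himg
    by_contra hneF
    obtain ⟨v, hv⟩ : ∃ v, v ∉ F := by
      by_contra h
      push_neg at h
      exact hneF (Set.eq_univ_of_forall h)
    obtain ⟨a, hav, haF⟩ := LCAAux.exists_basicZ hF.isOpen_compl (by exact hv)
    obtain ⟨b0, hb0B, hb0v⟩ := v.2
    have ha' : a ⊓ b0 ∈ v.1.1 := v.1.2.2.2.1 _ _ hav hb0v
    have hne' : a ⊓ b0 ≠ ⊥ := fun h => v.1.2.1 (h ▸ ha')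
    obtain ⟨b, hbB, hbpos, hlb⟩ := hL.2.2.2.2 _ (bot_lt_iff_ne_bot.mpr hne')
    obtain ⟨w0, hw0u, hbw0⟩ := LCAAux.exists_ultra_mem (A := A) (bot_lt_iff_ne_bot.mp hbpos)
    set p : {u : UltS A // ∃ b ∈ B, b ∈ u.1} := ⟨⟨w0, hw0u⟩, ⟨b, hbB, hbw0⟩⟩ with hp
    have hmem : Quotient.mk s p ∈ Quotient.mk s '' F := by
      rw [himg]; trivial
    obtain ⟨w, hwF, hwp⟩ := hmem
    have hrel : LCAAux.Rel C B p w := LCAAux.rel_symm hL.1 ((key w p).mp hwp)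
    have hab : a ⊓ b0 ∈ w.1.1 := LCAAux.mem_of_rel hrel hbw0 hlb
    have haw : a ∈ w.1.1 := w.1.2.2.1 _ _ hab inf_le_left
    exact haF haw hwF
  have hT2Q : T2Space (Quotient s) := by
    constructor
    intro y1 y2 hy
    obtain ⟨u, rfl⟩ := hsurj y1
    obtain ⟨v, rfl⟩ := hsurj y2
    have hnr : ¬ LCAAux.Rel C B u v := fun h => hy ((key u v).mpr h)
    obtain ⟨m, ⟨c', hc', hll⟩, ⟨d, hd, hll'⟩⟩ := LCAAux.sep hL hnr
    refine ⟨(Quotient.mk s '' (LCAAux.EZ B m)ᶜ)ᶜ, (Quotient.mk s '' (LCAAux.EZ B mᶜ)ᶜ)ᶜ,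
      (hclosed _ (LCAAux.isOpen_EZ m).isClosed_compl).isOpen_compl,
      (hclosed _ (LCAAux.isOpen_EZ mᶜ).isClosed_compl).isOpen_compl, ?_, ?_, ?_⟩
    · rintro ⟨w, hw, hwu⟩
      exact hw (LCAAux.mem_of_rel (LCAAux.rel_symm hL.1 ((key w u).mp hwu)) hc' hll)
    · rintro ⟨w, hw, hwv⟩
      exact hw (LCAAux.mem_of_rel (LCAAux.rel_symm hL.1 ((key w v).mp hwv)) hd hll')
    · rw [Set.disjoint_left]
      rintro y hy1 hy2
      obtain ⟨w, rfl⟩ := hsurj y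
      have h1 : m ∈ w.1.1 := by
        by_contra h
        exact hy1 ⟨w, h, rfl⟩
      have h2 : mᶜ ∈ w.1.1 := by
        by_contra h
        exact hy2 ⟨w, h, rfl⟩
      have := w.1.2.2.2.1 _ _ h1 h2
      rw [inf_compl_eq_bot] at this
      exact w.1.2.1 this
  haveI := hT2Q
  have hlc : LocallyCompactSpace (Quotient s) := by
    haveI : WeaklyLocallyCompactSpace (Quotient s) := by
      constructor
      intro y
      obtain ⟨u, rfl⟩ := hsurj y
      obtain ⟨e, heB, he⟩ := LCAAux.exists_bound hL u
      refine ⟨Quotient.mk s '' LCAAux.EZ B e, (LCAAux.isCompact_EZ heB).image hcont, ?_⟩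
      rw [mem_nhds_iff]
      refine ⟨(Quotient.mk s '' (LCAAux.EZ B e)ᶜ)ᶜ, ?_,
        (hclosed _ (LCAAux.isOpen_EZ e).isClosed_compl).isOpen_compl, ?_⟩
      · intro y' hy'
        obtain ⟨w, rfl⟩ := hsurj y'
        have hw : e ∈ w.1.1 := by
          by_contra h
          exact hy' ⟨w, h, rfl⟩
        exact ⟨w, hw, rfl⟩
      · rintro ⟨w, hw, hwu⟩
        exact hw (he w ((key u w).mp hwu.symm))
    exact WeaklyLocallyCompactSpace.locallyCompactSpace
  exact ⟨hcont, hsurj, hclosed, hfiber, hirr, hlc, hT2Q⟩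
end

section
/- Let p : X → Y be a closed irreducible continuous surjection of topological spaces. Then the map ρ_p : RC(X) → RC(Y), H ↦ p(H), is a Boolean isomorphism of the Boolean algebras of regular closed sets, with inverse K ↦ cl_X(p^{-1}(int_Y(K))). -/
/-- The set of regular closed subsets of a topological space `X`. -/
def RCset (X : Type*) [TopologicalSpace X] : Set (Set X) := {F | F = closure (interior F)}

open Set

set_option linter.unusedSectionVars false

section Aux

variable {X Y : Type*} [TopologicalSpace X] [TopologicalSpace Y]

/-- The closure of an open set is regular closed. -/
private lemma rc_closure_open {U : Set X} (hU : IsOpen U) :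
    closure U = closure (interior (closure U)) := by
  apply subset_antisymm
  · exact closure_mono (interior_maximal subset_closure hU)
  · calc closure (interior (closure U)) ⊆ closure (closure U) := closure_mono interior_subset
      _ = closure U := closure_closure

/-- For open sets `A`, `B`: `cl (int (cl A ∩ cl B)) = cl (A ∩ B)`. -/
private lemma int_cl_inter {A B : Set Y} (hA : IsOpen A) (hB : IsOpen B) :
    closure (interior (closure A ∩ closure B)) = closure (A ∩ B) := by
  apply subset_antisymm
  · apply closure_minimal _ isClosed_closure
    intro y hy
    rw [mem_closure_iff]
    intro O hO hyO
    have hyA : y ∈ closure A := (interior_subset hy).1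
    have h1 : ((O ∩ interior (closure A ∩ closure B)) ∩ A).Nonempty :=
      (mem_closure_iff.mp hyA) _ (hO.inter isOpen_interior) ⟨hyO, hy⟩
    obtain ⟨z, hz⟩ := h1
    have hzB : z ∈ closure B := (interior_subset hz.1.2).2
    have h2 : (((O ∩ interior (closure A ∩ closure B)) ∩ A) ∩ B).Nonempty :=
      (mem_closure_iff.mp hzB) _ ((hO.inter isOpen_interior).inter hA) hz
    obtain ⟨w, hw⟩ := h2
    exact ⟨w, hw.1.1.1, hw.1.2, hw.2⟩
  · exact closure_mono (interior_maximal
      (inter_subset_inter subset_closure subset_closure) (hA.inter hB))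

variable {p : X → Y}

/-- The "small image" of a set under `p`. -/
private def sharp (p : X → Y) (U : Set X) : Set Y := (p '' Uᶜ)ᶜ

private lemma preimage_sharp_subset (U : Set X) : p ⁻¹' sharp p U ⊆ U := by
  intro x hx
  by_contra h
  exact hx ⟨x, h, rfl⟩

private lemma sharp_subset_image (hs : Function.Surjective p) (U : Set X) :
    sharp p U ⊆ p '' U := by
  intro y hy
  obtain ⟨x, rfl⟩ := hs y
  exact ⟨x, preimage_sharp_subset U hy, rfl⟩

private lemma isOpen_sharp (hcl : IsClosedMap p) {U : Set X} (hU : IsOpen U) :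
    IsOpen (sharp p U) :=
  (hcl _ hU.isClosed_compl).isOpen_compl

private lemma sharp_nonempty
    (hirr : ∀ F : Set X, IsClosed F → p '' F = Set.univ → F = Set.univ)
    {U : Set X} (hU : IsOpen U) (hne : U.Nonempty) : (sharp p U).Nonempty := by
  rw [nonempty_iff_ne_empty]
  intro h
  have h1 : p '' Uᶜ = univ := by
    have := congrArg compl h
    simpa [sharp] using this
  have h2 : Uᶜ = univ := hirr _ hU.isClosed_compl h1
  rw [Set.compl_univ_iff] at h2
  exact hne.ne_empty h2

private lemma sharp_inter (U V : Set X) :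
    sharp p (U ∩ V) = sharp p U ∩ sharp p V := by
  simp [sharp, Set.compl_inter, Set.image_union, Set.compl_union]

private lemma sharp_preimage (hs : Function.Surjective p) (V : Set Y) :
    sharp p (p ⁻¹' V) = V := by
  simp [sharp, ← Set.preimage_compl, Set.image_preimage_eq _ hs]

private lemma sharp_compl (H : Set X) : sharp p Hᶜ = (p '' H)ᶜ := by
  simp [sharp]

private lemma image_subset_closure_sharp (hc : Continuous p) (hs : Function.Surjective p)
    (hirr : ∀ F : Set X, IsClosed F → p '' F = Set.univ → F = Set.univ)
    {U : Set X} (hU : IsOpen U) : p '' U ⊆ closure (sharp p U) := by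
  rintro _ ⟨x, hx, rfl⟩
  rw [mem_closure_iff]
  intro O hO hpO
  have h1 : (U ∩ p ⁻¹' O).Nonempty := ⟨x, hx, hpO⟩
  have h2 := sharp_nonempty hirr (hU.inter (hO.preimage hc)) h1
  rw [sharp_inter, sharp_preimage hs] at h2
  exact h2.imp fun y hy => ⟨hy.2, hy.1⟩

/-- For a closed continuous map, image commutes with closure. -/
private lemma image_closure_eq (hc : Continuous p) (hcl : IsClosedMap p) (A : Set X) :
    p '' closure A = closure (p '' A) :=
  subset_antisymm (image_closure_subset_closure_image hc)
    (closure_minimal (image_mono (f := p) subset_closure) (hcl _ isClosed_closure))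

/-- Key fact: for open `U`, `p '' (cl U) = cl (sharp U)`. -/
private lemma image_closure_open (hc : Continuous p) (hs : Function.Surjective p)
    (hcl : IsClosedMap p)
    (hirr : ∀ F : Set X, IsClosed F → p '' F = Set.univ → F = Set.univ)
    {U : Set X} (hU : IsOpen U) : p '' closure U = closure (sharp p U) := by
  apply subset_antisymm
  · rw [image_closure_eq hc hcl]
    calc closure (p '' U) ⊆ closure (closure (sharp p U)) :=
          closure_mono (image_subset_closure_sharp hc hs hirr hU)
      _ = closure (sharp p U) := closure_closure
  · exact closure_minimal
      ((sharp_subset_image hs U).trans (image_mono (f := p) subset_closure))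
      (hcl _ isClosed_closure)

end Aux

/-- Alexandroff's theorem: for a closed irreducible continuous
surjection `p : X → Y`, the map `ρ_p : RC(X) → RC(Y), H ↦ p(H)` is a Boolean
isomorphism, with inverse `K ↦ cl_X(p⁻¹(int_Y K))`: it is well-defined, a
bijection with the indicated inverse, and preserves joins, meets, complements
and the order (in both directions). -/
theorem image_regularClosed_boolean_iso {X Y : Type*} [TopologicalSpace X]
    [TopologicalSpace Y] (p : X → Y) (hc : Continuous p)
    (hs : Function.Surjective p) (hcl : IsClosedMap p)
    (hirr : ∀ F : Set X, IsClosed F → p '' F = Set.univ → F = Set.univ) :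
    (∀ H ∈ RCset X, p '' H ∈ RCset Y) ∧
    (∀ K ∈ RCset Y, closure (p ⁻¹' (interior K)) ∈ RCset X) ∧
    (∀ H ∈ RCset X, closure (p ⁻¹' (interior (p '' H))) = H) ∧
    (∀ K ∈ RCset Y, p '' closure (p ⁻¹' (interior K)) = K) ∧
    (∀ H ∈ RCset X, ∀ G ∈ RCset X, p '' (H ∪ G) = p '' H ∪ p '' G) ∧
    (∀ H ∈ RCset X, ∀ G ∈ RCset X,
      p '' closure (interior (H ∩ G)) = closure (interior (p '' H ∩ p '' G))) ∧
    (∀ H ∈ RCset X, p '' closure Hᶜ = closure (p '' H)ᶜ) ∧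
    (∀ H ∈ RCset X, ∀ G ∈ RCset X, (H ⊆ G ↔ p '' H ⊆ p '' G)) := by
  -- closedness of regular closed sets
  have hClosed : ∀ H ∈ RCset X, IsClosed H := fun H hH => hH ▸ isClosed_closure
  -- the image of a regular closed set is `cl (sharp (int H))`
  have himg : ∀ H ∈ RCset X, p '' H = closure (sharp p (interior H)) := by
    intro H hH
    conv_lhs => rw [hH]
    exact image_closure_open hc hs hcl hirr isOpen_interior
  refine ⟨?_, ?_, ?_, ?_, ?_, ?_, ?_, ?_⟩
  · -- well-defined
    intro H hH
    rw [RCset, mem_setOf_eq, himg H hH]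
    exact rc_closure_open (isOpen_sharp hcl isOpen_interior)
  · -- inverse well-defined
    intro K _
    exact rc_closure_open (isOpen_interior.preimage hc)
  · -- left inverse
    intro H hH
    have hHc := hClosed H hH
    set U := interior H with hU
    set S := sharp p U with hS
    have hSopen : IsOpen S := isOpen_sharp hcl isOpen_interior
    have hSint : S ⊆ interior (p '' H) := by
      rw [himg H hH]
      exact interior_maximal subset_closure hSopen
    have hVsub : interior (p '' H) ⊆ p '' H := interior_subset
    apply subset_antisymm
    · -- closure (p⁻¹ V) ⊆ H
      apply closure_minimal _ hHc
      intro x hx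
      by_contra hxH
      have hW : IsOpen (Hᶜ ∩ p ⁻¹' interior (p '' H)) :=
        hHc.isOpen_compl.inter (isOpen_interior.preimage hc)
      have hWne : (Hᶜ ∩ p ⁻¹' interior (p '' H)).Nonempty := ⟨x, hxH, hx⟩
      obtain ⟨y, hy⟩ := sharp_nonempty hirr hW hWne
      rw [sharp_inter, sharp_compl, sharp_preimage hs] at hy
      exact hy.1 (hVsub hy.2)
    · -- H ⊆ closure (p⁻¹ V)
      conv_lhs => rw [hH]
      apply closure_minimal _ isClosed_closure
      intro x hx
      rw [mem_closure_iff]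
      intro O hO hxO
      have h1 : (U ∩ O).Nonempty := ⟨x, hx, hxO⟩
      obtain ⟨y, hy⟩ := sharp_nonempty hirr (isOpen_interior.inter hO) h1
      rw [sharp_inter] at hy
      obtain ⟨z, rfl⟩ := hs y
      refine ⟨z, preimage_sharp_subset O hy.2, hSint hy.1⟩
  · -- right inverse
    intro K hK
    rw [image_closure_eq hc hcl, image_preimage_eq _ hs, ← hK]
  · -- joins
    intro H _ G _
    exact image_union p H G
  · -- meets
    intro H hH G hG
    rw [interior_inter]
    have hUG : interior H ∩ interior G = interior (interior H ∩ interior G) := by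
      rw [(isOpen_interior.inter isOpen_interior).interior_eq]
    rw [image_closure_open hc hs hcl hirr (isOpen_interior.inter isOpen_interior),
      sharp_inter, himg H hH, himg G hG,
      int_cl_inter (isOpen_sharp hcl isOpen_interior) (isOpen_sharp hcl isOpen_interior)]
  · -- complements
    intro H hH
    rw [image_closure_open hc hs hcl hirr (hClosed H hH).isOpen_compl]
    rw [sharp_compl]
  · -- order
    intro H hH G hG
    constructor
    · exact fun h => image_mono (f := p) h
    · intro h
      have hGc := hClosed G hG
      have hint : interior H ⊆ G := by
        intro x hx
        by_contra hxG
        have hW : IsOpen (interior H ∩ Gᶜ) := isOpen_interior.inter hGc.isOpen_compl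
        obtain ⟨y, hy⟩ := sharp_nonempty hirr hW ⟨x, hx, hxG⟩
        obtain ⟨g, hg, hgy⟩ := h ((sharp_subset_image hs _ hy).imp
          fun z hz => ⟨interior_subset hz.1.1, hz.2⟩)
        have hgmem : g ∈ p ⁻¹' sharp p (interior H ∩ Gᶜ) := by
          rw [mem_preimage, hgy]; exact hy
        exact (preimage_sharp_subset _ hgmem).2 hg
      conv_lhs => rw [hH]
      exact (closure_minimal hint hGc)
end
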